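/- arXiv:2409.03186 — 6 statements merged into one kernel-verified Lean document; each statement's English description precedes it below -/
import Mathlib

section
/- Let k > 0 and 0 < m₁ < m₂. For every convex function φ : ℝ → ℝ such that the series ∑_{x∈ℕ} φ(x/m₁)·f(x;k,m₁) and ∑_{x∈ℕ} φ(x/m₂)·f(x;k,m₂) are (absolutely) summable, one has ∑_{x∈ℕ} φ(x/m₂)·f(x;k,m₂) ≤ ∑_{x∈ℕ} φ(x/m₁)·f(x;k,m₁). (This is the convex-order formulation of the Lorenz-order statement NB(k,m₂) ≤_L NB(k,m₁): the negative binomial distribution decreases in the Lorenz order as the mean increases.) -/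
open Real MeasureTheory Filter Finset Set

/-- Coefficient of the generalized binomial series. -/
noncomputable def nbCoef (a : ℝ) (j : ℕ) : ℝ :=
  Real.Gamma (a + j) / (Real.Gamma a * (Nat.factorial j : ℝ))

lemma nbCoef_pos {a : ℝ} (ha : 0 < a) (j : ℕ) : 0 < nbCoef a j := by
  have h1 : 0 < Real.Gamma (a + j) := Real.Gamma_pos_of_pos (by positivity)
  have h2 : 0 < Real.Gamma a := Real.Gamma_pos_of_pos ha
  have h3 : (0:ℝ) < (Nat.factorial j : ℝ) := by positivity
  exact div_pos h1 (by positivity)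

lemma nbCoef_zero {a : ℝ} (ha : 0 < a) : nbCoef a 0 = 1 := by
  have h2 : Real.Gamma a ≠ 0 := (Real.Gamma_pos_of_pos ha).ne'
  simp [nbCoef, div_self h2]

lemma nbCoef_succ {a : ℝ} (ha : 0 < a) (j : ℕ) :
    nbCoef a (j + 1) = nbCoef a j * ((a + j) / (j + 1)) := by
  have haj : a + (j:ℝ) ≠ 0 := by positivity
  have h : Real.Gamma (a + (j+1:ℕ)) = (a + j) * Real.Gamma (a + j) := by
    rw [show (a + ((j:ℕ)+1:ℕ) : ℝ) = (a + j) + 1 by push_cast; ring]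
    exact Real.Gamma_add_one haj
  rw [nbCoef, nbCoef, h, Nat.factorial_succ]
  have h2 : (0:ℝ) < Real.Gamma a := Real.Gamma_pos_of_pos ha
  have h3 : (0:ℝ) < (Nat.factorial j : ℝ) := by positivity
  field_simp
  push_cast
  ring

lemma summable_nbCoef_mul_pow {a r : ℝ} (ha : 0 < a) (hr0 : 0 ≤ r) (hr1 : r < 1) :
    Summable (fun j : ℕ => nbCoef a j * r ^ j) := by
  rcases eq_or_lt_of_le hr0 with h0 | h0
  · apply summable_of_ne_finset_zero (s := {0})
    intro j hj
    simp only [Finset.mem_singleton] at hj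
    rw [← h0, zero_pow hj, mul_zero]
  · apply summable_of_ratio_test_tendsto_lt_one hr1
    · exact Filter.Eventually.of_forall fun j => (mul_pos (nbCoef_pos ha j) (pow_pos h0 j)).ne'
    · have key : ∀ j : ℕ, ‖nbCoef a (j+1) * r ^ (j+1)‖ / ‖nbCoef a j * r ^ j‖
          = r * ((a - 1) / (j + 1) + 1) := by
        intro j
        have hpos : 0 < nbCoef a j * r ^ j := mul_pos (nbCoef_pos ha j) (pow_pos h0 j)
        have hpos' : 0 < nbCoef a (j+1) * r ^ (j+1) :=
          mul_pos (nbCoef_pos ha (j+1)) (pow_pos h0 (j+1))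
        rw [Real.norm_eq_abs, Real.norm_eq_abs, abs_of_pos hpos, abs_of_pos hpos',
          nbCoef_succ ha j, pow_succ]
        have h1 : (0:ℝ) < (j:ℝ) + 1 := by positivity
        have hc0 : nbCoef a j ≠ 0 := (nbCoef_pos ha j).ne'
        field_simp
        ring
      simp only [key]
      have h2 : Filter.Tendsto (fun j : ℕ => (a - 1) / ((j:ℝ) + 1)) atTop (nhds 0) := by
        have := (tendsto_const_div_atTop_nhds_zero_nat (a - 1)).comp
          (tendsto_add_atTop_nat 1)
        apply this.congr
        intro j
        simp only [Function.comp]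
        push_cast
        ring
      have h3 : Filter.Tendsto (fun j : ℕ => r * ((a - 1) / ((j:ℝ) + 1) + 1)) atTop
          (nhds (r * (0 + 1))) := ((h2.add (tendsto_const_nhds (x := (1:ℝ)))).const_mul r)
      simpa using h3

lemma hasSum_binomialSeries {a r : ℝ} (ha : 0 < a) (hr0 : 0 ≤ r) (hr1 : r < 1) :
    HasSum (fun j : ℕ => nbCoef a j * r ^ j) ((1 - r) ^ (-a)) := by
  have hGa : 0 < Real.Gamma a := Real.Gamma_pos_of_pos ha
  have h1r : 0 < 1 - r := by linarith
  -- the summand with Gamma a cleared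
  set c : ℕ → ℝ := fun j => Real.Gamma (a + j) * r ^ j / (Nat.factorial j : ℝ) with hc
  have hc_eq : ∀ j, c j = nbCoef a j * r ^ j * Real.Gamma a := by
    intro j
    have : (Nat.factorial j : ℝ) ≠ 0 := by positivity
    have hGa' := hGa.ne'
    show Real.Gamma (a + j) * r ^ j / (Nat.factorial j : ℝ) = _
    unfold nbCoef
    field_simp
  have hc_summ : Summable c := by
    apply ((summable_nbCoef_mul_pow ha hr0 hr1).mul_right (Real.Gamma a)).congr
    intro j; rw [hc_eq]
  have hc_nonneg : ∀ j, 0 ≤ c j := by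
    intro j
    rw [hc_eq]
    exact mul_nonneg (mul_nonneg (nbCoef_pos ha j).le (pow_nonneg hr0 j)) hGa.le
  -- integrand family
  set g : ℕ → ℝ → ℝ := fun j t => Real.exp (-t) * t ^ (a - 1) * ((r * t) ^ j / (Nat.factorial j : ℝ))
    with hg
  -- each integral
  have hint : ∀ j : ℕ, ∫ t in Ioi (0:ℝ), g j t = c j := by
    intro j
    have heq : ∀ t ∈ Ioi (0:ℝ), g j t
        = (r ^ j / (Nat.factorial j : ℝ)) * (Real.exp (-t) * t ^ (a + j - 1)) := by
      intro t ht
      have ht' : (0:ℝ) < t := ht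
      rw [hg]
      simp only
      rw [mul_pow, show (a + (j:ℝ) - 1) = (a - 1) + (j:ℝ) by ring,
        Real.rpow_add ht', Real.rpow_natCast]
      ring
    rw [setIntegral_congr_fun measurableSet_Ioi heq, integral_const_mul,
      ← Real.Gamma_eq_integral (by positivity : (0:ℝ) < a + j)]
    rw [hc]
    ring
  -- integrability of each g j
  have hintg : ∀ j : ℕ, IntegrableOn (g j) (Ioi (0:ℝ)) := by
    intro j
    have h : IntegrableOn
        (fun t : ℝ => ((r:ℝ) ^ j / (Nat.factorial j : ℝ)) * (Real.exp (-t) * t ^ (a + j - 1)))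
        (Ioi (0:ℝ)) :=
      (Real.GammaIntegral_convergent (by positivity : (0:ℝ) < a + j)).smul
        ((r:ℝ) ^ j / (Nat.factorial j : ℝ))
    apply h.congr_fun _ measurableSet_Ioi
    intro t ht
    have ht' : (0:ℝ) < t := ht
    rw [hg]
    simp only
    rw [mul_pow, show (a + (j:ℝ) - 1) = (a - 1) + (j:ℝ) by ring,
      Real.rpow_add ht', Real.rpow_natCast]
    ring
  -- nonnegativity of g j on Ioi 0
  have hg_nonneg : ∀ j : ℕ, ∀ t ∈ Ioi (0:ℝ), 0 ≤ g j t := by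
    intro j t ht
    have ht' : (0:ℝ) < t := ht
    have : 0 ≤ r * t := mul_nonneg hr0 ht'.le
    rw [hg]
    positivity
  -- measurability
  have hmeas : ∀ j : ℕ, AEStronglyMeasurable (g j) (volume.restrict (Ioi (0:ℝ))) := by
    intro j
    exact (hintg j).aestronglyMeasurable
  -- the lintegral bound
  have hlint : ∑' j : ℕ, ∫⁻ t, ‖g j t‖₊ ∂(volume.restrict (Ioi (0:ℝ))) ≠ ⊤ := by
    have heq : ∀ j : ℕ, ∫⁻ t, (‖g j t‖₊ : ENNReal) ∂(volume.restrict (Ioi (0:ℝ)))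
        = ENNReal.ofReal (c j) := by
      intro j
      rw [show (∫⁻ t, (‖g j t‖₊ : ENNReal) ∂(volume.restrict (Ioi (0:ℝ))))
          = ∫⁻ t, ENNReal.ofReal (g j t) ∂(volume.restrict (Ioi (0:ℝ))) from
        lintegral_congr_ae (by
          filter_upwards [ae_restrict_mem measurableSet_Ioi] with t ht
          exact Real.enorm_eq_ofReal (hg_nonneg j t ht)),
        ← ofReal_integral_eq_lintegral_ofReal (hintg j)
          ((ae_restrict_iff' measurableSet_Ioi).2 (Filter.Eventually.of_forall (hg_nonneg j))),
        hint j]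
    simp only [heq]
    rw [← ENNReal.ofReal_tsum_of_nonneg hc_nonneg hc_summ]
    exact ENNReal.ofReal_ne_top
  -- swap integral and sum
  have hswap := MeasureTheory.integral_tsum hmeas hlint
  -- pointwise sum of g
  have hptsum : ∀ t ∈ Ioi (0:ℝ), ∑' j, g j t = t ^ (a - 1) * Real.exp (-((1 - r) * t)) := by
    intro t ht
    have hexp : HasSum (fun j : ℕ => (r * t) ^ j / (Nat.factorial j : ℝ)) (Real.exp (r * t)) := by
      have := NormedSpace.expSeries_div_hasSum_exp (r * t)
      rwa [← Real.exp_eq_exp_ℝ] at this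
    have h5 := (hexp.mul_left (Real.exp (-t) * t ^ (a - 1)))
    rw [h5.tsum_eq, show Real.exp (-t) * t ^ (a - 1) * Real.exp (r * t)
      = t ^ (a - 1) * (Real.exp (-t) * Real.exp (r * t)) by ring, ← Real.exp_add]
    ring_nf
  -- value of the limit integral
  have hval : ∫ t in Ioi (0:ℝ), (∑' j, g j t) = (1 / (1 - r)) ^ a * Real.Gamma a := by
    rw [setIntegral_congr_fun measurableSet_Ioi hptsum]
    exact Real.integral_rpow_mul_exp_neg_mul_Ioi ha h1r
  rw [hswap] at hval
  simp only [hint] at hval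
  -- conclude
  have htsum : ∑' j, nbCoef a j * r ^ j = (1 - r) ^ (-a) := by
    have h2 : ∑' j, nbCoef a j * r ^ j = (∑' j, c j) / Real.Gamma a := by
      rw [← tsum_div_const]
      apply tsum_congr
      intro j
      rw [hc_eq]
      field_simp
    rw [h2, hval, Real.rpow_neg h1r.le, ← Real.inv_rpow h1r.le]
    rw [one_div]
    field_simp
  have := (summable_nbCoef_mul_pow ha hr0 hr1).hasSum
  rwa [htsum] at this

/-- Probability mass function of the negative binomial distribution with
shape `k > 0` and mean `m > 0`:
`f(x;k,m) = (Γ(k+x)/(Γ(k)·x!)) · (k/(k+m))^k · (m/(k+m))^x`. -/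
noncomputable def nbPmf (k m : ℝ) (x : ℕ) : ℝ :=
  Real.Gamma (k + x) / (Real.Gamma k * (Nat.factorial x : ℝ)) *
    (k / (k + m)) ^ (k : ℝ) * (m / (k + m)) ^ x

lemma nbPmf_eq (k m : ℝ) (x : ℕ) :
    nbPmf k m x = nbCoef k x * (k / (k + m)) ^ (k : ℝ) * (m / (k + m)) ^ x := rfl

lemma nbPmf_nonneg {k m : ℝ} (hk : 0 < k) (hm : 0 < m) (x : ℕ) : 0 ≤ nbPmf k m x := by
  rw [nbPmf_eq]
  have := nbCoef_pos hk x
  have h1 : (0:ℝ) < k + m := by linarith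
  positivity

/-- The binomial thinning kernel. -/
noncomputable def thin (α : ℝ) (x y : ℕ) : ℝ :=
  if y ≤ x then (x.choose y : ℝ) * α ^ y * (1 - α) ^ (x - y) else 0

lemma thin_nonneg {α : ℝ} (h0 : 0 ≤ α) (h1 : α ≤ 1) (x y : ℕ) : 0 ≤ thin α x y := by
  rw [thin]
  split
  · have : (0:ℝ) ≤ 1 - α := by linarith
    positivity
  · exact le_refl _

/-- Binomial thinning of `NB(k,m₂)` with retention probability `m₁/m₂` gives `NB(k,m₁)`. -/
lemma mixture {k m₁ m₂ : ℝ} (hk : 0 < k) (hm₁ : 0 < m₁) (hm : m₁ < m₂) (y : ℕ) :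
    HasSum (fun x : ℕ => nbPmf k m₂ x * thin (m₁ / m₂) x y) (nbPmf k m₁ y) := by
  have hm₂ : 0 < m₂ := hm₁.trans hm
  set α := m₁ / m₂ with hα
  have hα0 : 0 < α := div_pos hm₁ hm₂
  have hα1 : α < 1 := (div_lt_one hm₂).2 hm
  have hs₂ : (0:ℝ) < k + m₂ := by linarith
  have hs₁ : (0:ℝ) < k + m₁ := by linarith
  set r : ℝ := (m₂ - m₁) / (k + m₂) with hr
  have hr0 : 0 ≤ r := div_nonneg (by linarith) hs₂.le
  have hr1 : r < 1 := by
    rw [hr, div_lt_one hs₂]; linarith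
  have h1r : 1 - r = (k + m₁) / (k + m₂) := by
    rw [hr]; field_simp; ring
  set f : ℕ → ℝ := fun x => nbPmf k m₂ x * thin α x y with hf
  -- the shifted function
  set D : ℝ := (k / (k + m₂)) ^ (k:ℝ) * (m₁ / (k + m₂)) ^ y * Real.Gamma (k + y) /
      (Real.Gamma k * (Nat.factorial y : ℝ)) with hD
  have hshift : ∀ j : ℕ, f (j + y) = D * (nbCoef (k + y) j * r ^ j) := by
    intro j
    have hle : y ≤ j + y := Nat.le_add_left y j
    have hsub : j + y - y = j := by omega
    rw [hf]
    simp only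
    rw [thin, if_pos hle, hsub, nbPmf_eq, nbCoef, hD, nbCoef]
    have hfact : ((j + y).choose y : ℝ) = ((j+y).factorial : ℝ) /
        ((Nat.factorial y : ℝ) * (Nat.factorial j : ℝ)) := by
      rw [eq_div_iff (by positivity)]
      rw [← Nat.cast_mul, ← Nat.cast_mul, ← Nat.add_sub_cancel (n := j) (m := y)]
      norm_cast
      rw [Nat.add_sub_cancel]
      have h6 := Nat.choose_mul_factorial_mul_factorial hle
      rw [hsub] at h6
      rw [← mul_assoc]
      exact h6
    have hgamma : (k + ((j:ℕ) + y : ℕ) : ℝ) = (k + y) + j := by push_cast; ring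
    rw [hgamma]
    have hq2 : (m₂ / (k + m₂)) ^ (j + y) = (m₂ / (k + m₂)) ^ j * (m₂ / (k + m₂)) ^ y := by
      rw [pow_add]
    have h1α : 1 - α = (m₂ - m₁) / m₂ := by rw [hα]; field_simp
    rw [hq2, hfact, h1α]
    have hm₂' : m₂ ≠ 0 := hm₂.ne'
    have hs₂' : (k + m₂) ≠ 0 := hs₂.ne'
    have hfj : (Nat.factorial j : ℝ) ≠ 0 := by positivity
    have hfy : (Nat.factorial y : ℝ) ≠ 0 := by positivity
    have hfjy : ((j+y).factorial : ℝ) ≠ 0 := by positivity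
    have hGk : Real.Gamma k ≠ 0 := (Real.Gamma_pos_of_pos hk).ne'
    have hGky : Real.Gamma (k + y) ≠ 0 := (Real.Gamma_pos_of_pos (by positivity)).ne'
    rw [hα, hr]
    field_simp
    ring_nf
    have h1 : m₂ * m₂⁻¹ - m₁ * m₂⁻¹ = (m₂ - m₁) * m₂⁻¹ := by ring
    have h2 : m₂ * (m₂ + k)⁻¹ - (m₂ + k)⁻¹ * m₁ = (m₂ - m₁) * (m₂ + k)⁻¹ := by ring
    rw [h1, h2, mul_pow, mul_pow, inv_pow, inv_pow, inv_pow, inv_pow]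
    have : m₂ ^ y ≠ 0 := pow_ne_zero _ hm₂'
    have : m₂ ^ j ≠ 0 := pow_ne_zero _ hm₂'
    field_simp
  have hkey : HasSum (fun j : ℕ => f (j + y)) (nbPmf k m₁ y) := by
    have hbs := (hasSum_binomialSeries (a := k + y) (by positivity) hr0 hr1).mul_left D
    have hval : D * (1 - r) ^ (-(k + (y:ℝ))) = nbPmf k m₁ y := by
      rw [hD, h1r, nbPmf_eq, nbCoef]
      have e1 : ((k + m₁) / (k + m₂)) ^ (-(k + (y:ℝ)))
          = ((k + m₂) / (k + m₁)) ^ (k:ℝ) * ((k + m₂) / (k + m₁)) ^ y := by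
        rw [← Real.rpow_natCast ((k+m₂)/(k+m₁)) y, ← Real.rpow_add (by positivity),
          Real.rpow_neg (by positivity), ← Real.inv_rpow (by positivity)]
        congr 1
        rw [inv_div]
      rw [e1]
      have e2 : (k / (k + m₂)) ^ (k:ℝ) * ((k + m₂) / (k + m₁)) ^ (k:ℝ)
          = (k / (k + m₁)) ^ (k:ℝ) := by
        rw [← Real.mul_rpow (by positivity) (by positivity)]
        congr 1
        field_simp
      have e3 : (m₁ / (k + m₂)) ^ y * ((k + m₂) / (k + m₁)) ^ y
          = (m₁ / (k + m₁)) ^ y := by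
        rw [← mul_pow]
        congr 1
        field_simp
      have e4 : (k / (k + m₂)) ^ (k:ℝ) * (m₁ / (k + m₂)) ^ y * Real.Gamma (k + y) /
            (Real.Gamma k * (Nat.factorial y : ℝ)) *
            (((k + m₂) / (k + m₁)) ^ (k:ℝ) * ((k + m₂) / (k + m₁)) ^ y)
          = Real.Gamma (k + y) / (Real.Gamma k * (Nat.factorial y : ℝ)) *
            ((k / (k + m₂)) ^ (k:ℝ) * ((k + m₂) / (k + m₁)) ^ (k:ℝ)) *
            ((m₁ / (k + m₂)) ^ y * ((k + m₂) / (k + m₁)) ^ y) := by ring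
      rw [e4, e2, e3]
    rw [← hval]
    have hfe : (fun j : ℕ => f (j + y)) = fun j : ℕ => D * (nbCoef (k + y) j * r ^ j) :=
      funext hshift
    rw [hfe]
    exact hbs
  have hzero : ∀ i ∈ Finset.range y, f i = 0 := by
    intro i hi
    rw [Finset.mem_range] at hi
    rw [hf]
    simp only
    rw [thin, if_neg (by omega), mul_zero]
  have := (hasSum_nat_add_iff (f := f) y).1 hkey
  rwa [Finset.sum_eq_zero hzero, add_zero] at this

lemma thin_sum_eq_one {α : ℝ} (x : ℕ) :
    ∑ y ∈ Finset.range (x + 1), thin α x y = 1 := by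
  have h := add_pow α (1 - α) x
  rw [show α + (1 - α) = 1 by ring, one_pow] at h
  rw [h]
  apply Finset.sum_congr rfl
  intro y hy
  rw [Finset.mem_range] at hy
  rw [thin, if_pos (by omega)]
  ring

lemma binomial_mean (α : ℝ) (x : ℕ) :
    ∑ y ∈ Finset.range (x + 1), (y : ℝ) * thin α x y = x * α := by
  induction x with
  | zero => simp [thin]
  | succ n _ =>
    rw [Finset.sum_range_succ']
    simp only [Nat.cast_zero, zero_mul, add_zero]
    have hterm : ∀ i ∈ Finset.range (n + 1),
        ((i:ℝ) + 1) * thin α (n + 1) (i + 1) = ((n:ℝ) + 1) * α * thin α n i := by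
      intro i hi
      rw [Finset.mem_range] at hi
      have hle1 : i + 1 ≤ n + 1 := by omega
      have hle2 : i ≤ n := by omega
      rw [thin, thin, if_pos hle1, if_pos hle2]
      have hsub : n + 1 - (i + 1) = n - i := by omega
      rw [hsub]
      have hch : ((n:ℝ) + 1) * ((n.choose i : ℕ) : ℝ) = (((n+1).choose (i+1) : ℕ) : ℝ) * ((i:ℝ) + 1) := by
        have := Nat.add_one_mul_choose_eq n i
        have := congrArg (fun t : ℕ => (t : ℝ)) this
        push_cast at this
        convert this using 2 <;> push_cast <;> ring
      rw [pow_succ]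
      linear_combination (-(α ^ i * α * (1 - α) ^ (n - i))) * hch
    calc ∑ i ∈ Finset.range (n + 1), (↑(i + 1) : ℝ) * thin α (n + 1) (i + 1)
        = ∑ i ∈ Finset.range (n + 1), ((n:ℝ) + 1) * α * thin α n i := by
          apply Finset.sum_congr rfl
          intro i hi
          push_cast
          exact hterm i hi
      _ = ((n:ℝ) + 1) * α * ∑ i ∈ Finset.range (n + 1), thin α n i := by
          rw [Finset.mul_sum]
      _ = (↑(n + 1) : ℝ) * α := by rw [thin_sum_eq_one]; push_cast; ring

lemma jensen_step {m₁ m₂ : ℝ} (hm₁ : 0 < m₁) (hm : m₁ < m₂) {φ : ℝ → ℝ}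
    (hφ : ConvexOn ℝ Set.univ φ) (x : ℕ) :
    φ ((x : ℝ) / m₂) ≤ ∑ y ∈ Finset.range (x + 1), thin (m₁ / m₂) x y * φ ((y : ℝ) / m₁) := by
  have hm₂ : 0 < m₂ := hm₁.trans hm
  have hα0 : 0 ≤ m₁ / m₂ := by positivity
  have hα1 : m₁ / m₂ ≤ 1 := le_of_lt ((div_lt_one hm₂).2 hm)
  have hmean : ∑ y ∈ Finset.range (x + 1), thin (m₁ / m₂) x y • ((y : ℝ) / m₁)
      = (x : ℝ) / m₂ := by
    simp only [smul_eq_mul]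
    have : ∀ y ∈ Finset.range (x+1), thin (m₁ / m₂) x y * ((y : ℝ) / m₁)
        = ((y:ℝ) * thin (m₁ / m₂) x y) / m₁ := by
      intro y _; ring
    rw [Finset.sum_congr rfl this, ← Finset.sum_div, binomial_mean]
    field_simp
  have h := hφ.map_sum_le (t := Finset.range (x + 1)) (w := fun y => thin (m₁ / m₂) x y)
    (p := fun y => (y : ℝ) / m₁) (fun y _ => thin_nonneg hα0 hα1 x y)
    (thin_sum_eq_one x) (fun y _ => Set.mem_univ _)
  rw [hmean] at h
  simpa only [smul_eq_mul] using h

lemma convex_neg_bound {φ : ℝ → ℝ} (hφ : ConvexOn ℝ Set.univ φ) :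
    ∃ A : ℝ, 0 ≤ A ∧ ∀ t : ℝ, 0 ≤ t → -φ t ≤ A + A * t := by
  refine ⟨|φ 0| + 2 * |φ 1| + |φ 2|, by positivity, ?_⟩
  intro t ht
  rcases le_or_gt t 1 with h | h
  · have h2t : (0:ℝ) < 2 - t := by linarith
    have ha : (0:ℝ) ≤ 1 / (2 - t) := by positivity
    have hb : (0:ℝ) ≤ (1 - t) / (2 - t) := by
      apply div_nonneg (by linarith) h2t.le
    have hab : 1 / (2 - t) + (1 - t) / (2 - t) = 1 := by field_simp; ring
    have key := hφ.2 (Set.mem_univ t) (Set.mem_univ (2:ℝ)) ha hb hab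
    rw [show (1 / (2 - t)) • t + ((1 - t) / (2 - t)) • (2:ℝ) = 1 by
      simp only [smul_eq_mul]; field_simp; ring] at key
    simp only [smul_eq_mul] at key
    have key2 : (2 - t) * φ 1 ≤ φ t + (1 - t) * φ 2 := by
      have := mul_le_mul_of_nonneg_left key h2t.le
      calc (2 - t) * φ 1 = (2 - t) * φ 1 := rfl
        _ ≤ (2 - t) * (1 / (2 - t) * φ t + (1 - t) / (2 - t) * φ 2) := this
        _ = φ t + (1 - t) * φ 2 := by field_simp
    nlinarith [le_abs_self (φ 2), neg_abs_le (φ 1), abs_nonneg (φ 0), abs_nonneg (φ 1),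
      abs_nonneg (φ 2), mul_nonneg (by linarith : (0:ℝ) ≤ 1 - t) (by linarith [le_abs_self (φ 2)] : 0 ≤ |φ 2| - φ 2),
      mul_nonneg (by linarith : (0:ℝ) ≤ 2 - t) (by linarith [neg_abs_le (φ 1)] : 0 ≤ |φ 1| + φ 1)]
  · have ht0 : (0:ℝ) < t := by linarith
    have ha : (0:ℝ) ≤ 1 - 1 / t := by
      have : 1 / t ≤ 1 := by rw [div_le_one ht0]; linarith
      linarith
    have hb : (0:ℝ) ≤ 1 / t := by positivity
    have hab : (1 - 1 / t) + 1 / t = 1 := by ring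
    have key := hφ.2 (Set.mem_univ (0:ℝ)) (Set.mem_univ t) ha hb hab
    rw [show (1 - 1 / t) • (0:ℝ) + (1 / t) • t = 1 by simp only [smul_eq_mul]; field_simp; ring] at key
    simp only [smul_eq_mul] at key
    have key2 : t * φ 1 ≤ (t - 1) * φ 0 + φ t := by
      have := mul_le_mul_of_nonneg_left key ht0.le
      calc t * φ 1 ≤ t * ((1 - 1 / t) * φ 0 + 1 / t * φ t) := this
        _ = (t - 1) * φ 0 + φ t := by field_simp
    nlinarith [le_abs_self (φ 0), neg_abs_le (φ 1), abs_nonneg (φ 0), abs_nonneg (φ 1),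
      abs_nonneg (φ 2),
      mul_nonneg (by linarith : (0:ℝ) ≤ t - 1) (by linarith [le_abs_self (φ 0)] : 0 ≤ |φ 0| - φ 0),
      mul_nonneg ht0.le (by linarith [neg_abs_le (φ 1)] : 0 ≤ |φ 1| + φ 1)]

lemma summable_nbPmf {k m : ℝ} (hk : 0 < k) (hm : 0 < m) : Summable (nbPmf k m) := by
  have hs : (0:ℝ) < k + m := by linarith
  have hq0 : (0:ℝ) ≤ m / (k + m) := by positivity
  have hq1 : m / (k + m) < 1 := by rw [div_lt_one hs]; linarith
  apply ((summable_nbCoef_mul_pow hk hq0 hq1).mul_right ((k / (k + m)) ^ (k:ℝ))).congr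
  intro x
  rw [nbPmf_eq]
  ring

lemma nbCoef_shift {k : ℝ} (hk : 0 < k) (x : ℕ) :
    nbCoef (k + 1) x = nbCoef k x * ((k + x) / k) := by
  have h1 : Real.Gamma (k + 1 + x) = (k + x) * Real.Gamma (k + x) := by
    rw [show k + 1 + (x:ℝ) = (k + x) + 1 by ring]
    exact Real.Gamma_add_one (by positivity)
  have h2 : Real.Gamma (k + 1) = k * Real.Gamma k := Real.Gamma_add_one hk.ne'
  rw [nbCoef, nbCoef, h1, h2]
  have hGk : Real.Gamma k ≠ 0 := (Real.Gamma_pos_of_pos hk).ne'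
  have hfx : (Nat.factorial x : ℝ) ≠ 0 := by positivity
  field_simp

lemma summable_cast_mul_nbPmf {k m : ℝ} (hk : 0 < k) (hm : 0 < m) :
    Summable (fun x : ℕ => (x : ℝ) * nbPmf k m x) := by
  have hs : (0:ℝ) < k + m := by linarith
  have hq0 : (0:ℝ) ≤ m / (k + m) := by positivity
  have hq1 : m / (k + m) < 1 := by rw [div_lt_one hs]; linarith
  have s1 := summable_nbCoef_mul_pow (by positivity : (0:ℝ) < k + 1) hq0 hq1
  have s2 := summable_nbCoef_mul_pow hk hq0 hq1
  apply ((((s1.mul_left k).sub (s2.mul_left k)).mul_right ((k / (k + m)) ^ (k:ℝ)))).congr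
  intro x
  rw [nbPmf_eq, nbCoef_shift hk]
  field_simp
  ring

lemma summable_abs_phi {k m : ℝ} (hk : 0 < k) (hm : 0 < m) {φ : ℝ → ℝ}
    (hφ : ConvexOn ℝ Set.univ φ)
    (h₁ : Summable (fun x : ℕ => φ ((x : ℝ) / m) * nbPmf k m x)) :
    Summable (fun y : ℕ => |φ ((y : ℝ) / m)| * nbPmf k m y) := by
  obtain ⟨A, hA, hbound⟩ := convex_neg_bound hφ
  have hB : Summable (fun y : ℕ => φ ((y : ℝ) / m) * nbPmf k m y
      + 2 * A * nbPmf k m y + 2 * A / m * ((y : ℝ) * nbPmf k m y)) :=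
    (h₁.add ((summable_nbPmf hk hm).mul_left (2 * A))).add
      ((summable_cast_mul_nbPmf hk hm).mul_left (2 * A / m))
  apply Summable.of_nonneg_of_le
    (fun y => mul_nonneg (abs_nonneg _) (nbPmf_nonneg hk hm y)) _ hB
  intro y
  set s : ℝ := (y : ℝ) / m with hsdef
  have hs0 : 0 ≤ s := by positivity
  have hmin := hbound s hs0
  have hAs : 0 ≤ A * s := mul_nonneg hA hs0
  have habs : |φ s| ≤ φ s + 2 * A + 2 * (A * s) := by
    rw [abs_le]
    constructor <;> linarith
  have hnb := nbPmf_nonneg hk hm y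
  calc |φ s| * nbPmf k m y ≤ (φ s + 2 * A + 2 * (A * s)) * nbPmf k m y :=
        mul_le_mul_of_nonneg_right habs hnb
    _ = φ s * nbPmf k m y + 2 * A * nbPmf k m y + 2 * A / m * ((y:ℝ) * nbPmf k m y) := by
        rw [hsdef]; field_simp

/-- The negative binomial distribution decreases in the Lorenz order as the mean
increases (convex-order formulation). -/
theorem nb_lorenz_decreasing_in_mean (k m₁ m₂ : ℝ) (hk : 0 < k)
    (hm₁ : 0 < m₁) (hm : m₁ < m₂) (φ : ℝ → ℝ) (hφ : ConvexOn ℝ Set.univ φ)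
    (h₁ : Summable (fun x : ℕ => φ ((x : ℝ) / m₁) * nbPmf k m₁ x))
    (h₂ : Summable (fun x : ℕ => φ ((x : ℝ) / m₂) * nbPmf k m₂ x)) :
    ∑' x : ℕ, φ ((x : ℝ) / m₂) * nbPmf k m₂ x ≤
      ∑' x : ℕ, φ ((x : ℝ) / m₁) * nbPmf k m₁ x := by
  have hm₂ : 0 < m₂ := hm₁.trans hm
  have hα0 : (0:ℝ) ≤ m₁ / m₂ := by positivity
  have hα1 : m₁ / m₂ ≤ 1 := le_of_lt ((div_lt_one hm₂).2 hm)
  set G : ℕ × ℕ → ℝ :=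
    fun p => nbPmf k m₂ p.2 * thin (m₁ / m₂) p.2 p.1 * φ ((p.1 : ℝ) / m₁) with hG
  have habsφ := summable_abs_phi hk hm₁ hφ h₁
  have hfib : ∀ y : ℕ, HasSum (fun x => G (y, x)) (nbPmf k m₁ y * φ ((y:ℝ)/m₁)) :=
    fun y => (mixture hk hm₁ hm y).mul_right _
  have hfib_abs : ∀ y : ℕ, HasSum (fun x => |G (y, x)|)
      (nbPmf k m₁ y * |φ ((y:ℝ)/m₁)|) := by
    intro y
    have h := (mixture hk hm₁ hm y).mul_right |φ ((y:ℝ)/m₁)|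
    apply h.congr_fun
    intro x
    rw [hG]
    simp only
    rw [abs_mul, abs_mul, abs_of_nonneg (nbPmf_nonneg hk hm₂ x),
      abs_of_nonneg (thin_nonneg hα0 hα1 x y)]
  have habs : Summable (fun p : ℕ × ℕ => |G p|) := by
    rw [summable_prod_of_nonneg (fun p => abs_nonneg _)]
    refine ⟨fun y => (hfib_abs y).summable, ?_⟩
    have he : (fun y : ℕ => ∑' x, |G (y, x)|)
        = fun y => nbPmf k m₁ y * |φ ((y:ℝ)/m₁)| :=
      funext fun y => (hfib_abs y).tsum_eq
    rw [he]
    exact habsφ.congr (fun y => mul_comm _ _)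
  have hGsum : Summable G := summable_abs_iff.1 habs
  have hRHS : HasSum (fun y : ℕ => nbPmf k m₁ y * φ ((y:ℝ)/m₁)) (∑' p, G p) :=
    hGsum.hasSum.prod_fiberwise hfib
  have hxfib : ∀ x : ℕ, HasSum (fun y => G (y, x))
      (nbPmf k m₂ x * ∑ y ∈ Finset.range (x+1), thin (m₁ / m₂) x y * φ ((y:ℝ)/m₁)) := by
    intro x
    have hzero : ∀ y ∉ Finset.range (x+1), G (y, x) = 0 := by
      intro y hy
      rw [Finset.mem_range] at hy
      rw [hG]
      simp only
      rw [thin, if_neg (by omega)]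
      ring
    have h := hasSum_sum_of_ne_finset_zero (L := SummationFilter.unconditional ℕ) hzero
    convert h using 1
    rw [Finset.mul_sum]
    apply Finset.sum_congr rfl
    intro y _
    rw [hG]
    simp only
    ring
  have hswap : Summable (fun p : ℕ × ℕ => G p.swap) := hGsum.prod_symm
  have hLHS : HasSum
      (fun x : ℕ => nbPmf k m₂ x * ∑ y ∈ Finset.range (x+1), thin (m₁ / m₂) x y * φ ((y:ℝ)/m₁))
      (∑' p : ℕ × ℕ, G p.swap) :=
    hswap.hasSum.prod_fiberwise (fun x => hxfib x)
  have hswap_eq : ∑' p : ℕ × ℕ, G p.swap = ∑' p, G p := (Equiv.prodComm ℕ ℕ).tsum_eq G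
  have step : ∑' x : ℕ, φ ((x:ℝ)/m₂) * nbPmf k m₂ x ≤ ∑' p, G p := by
    rw [← hswap_eq, ← hLHS.tsum_eq]
    apply h₂.tsum_le_tsum _ hLHS.summable
    intro x
    have hj := jensen_step hm₁ hm hφ x
    have h5 := mul_le_mul_of_nonneg_left hj (nbPmf_nonneg hk hm₂ x)
    calc φ ((x:ℝ)/m₂) * nbPmf k m₂ x = nbPmf k m₂ x * φ ((x:ℝ)/m₂) := mul_comm _ _
      _ ≤ _ := h5
  have hfin : ∑' p, G p = ∑' x : ℕ, φ ((x:ℝ)/m₁) * nbPmf k m₁ x := by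
    rw [← hRHS.tsum_eq]
    exact tsum_congr fun y => mul_comm _ _
  exact step.trans_eq hfin
end

section
/- Binomial thinning of a negative binomial distribution is negative binomial: let k > 0 and 0 < m₁ < m₂, and set p = m₁/m₂. Then for every x ∈ ℕ, ∑_{y=x}^{∞} f(y;k,m₂) · C(y,x) · p^x · (1−p)^{y−x} = f(x;k,m₁), where C(y,x) is the binomial coefficient. (Equivalently: if X₂ ~ NB(k,m₂) and, conditional on X₂, X₁ ~ Binomial(X₂, m₁/m₂), then X₁ ~ NB(k,m₁).) -/
open Real MeasureTheory Set Filter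

private lemma summable_gammaSeries {a t : ℝ} (ha : 0 < a) (ht0 : 0 < t) (ht1 : t < 1) :
    Summable (fun j : ℕ => Real.Gamma (a + j) / (Nat.factorial j : ℝ) * t ^ j) := by
  apply summable_of_ratio_test_tendsto_lt_one ht1
  · filter_upwards with n
    have h1 : 0 < Real.Gamma (a + n) := Real.Gamma_pos_of_pos (by positivity)
    have h2 : (0:ℝ) < (Nat.factorial n : ℝ) := by positivity
    positivity
  · have hlim : Tendsto (fun n : ℕ => (a + n) / (n + 1) * t) atTop (nhds t) := by
      have h1 : Tendsto (fun n : ℕ => (a + n) / (n + 1)) atTop (nhds 1) := by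
        have he : (fun n : ℕ => (a + n) / (n + 1)) = fun n : ℕ => (a - 1) / ((n:ℝ) + 1) + 1 := by
          ext n
          have : ((n:ℝ) + 1) ≠ 0 := by positivity
          field_simp
          ring
        rw [he]
        have h0 : Tendsto (fun n : ℕ => (a - 1) / ((n:ℝ) + 1)) atTop (nhds 0) :=
          Tendsto.div_atTop tendsto_const_nhds
            (tendsto_atTop_add_const_right _ 1 tendsto_natCast_atTop_atTop)
        simpa using h0.add tendsto_const_nhds
      simpa using h1.mul_const t
    refine Tendsto.congr (fun n => ?_) hlim
    have hG : 0 < Real.Gamma (a + n) := Real.Gamma_pos_of_pos (by positivity)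
    have hGn : Real.Gamma (a + ((n:ℕ)+1 : ℕ)) = (a + n) * Real.Gamma (a + n) := by
      push_cast
      rw [show a + ((n:ℝ) + 1) = (a + n) + 1 by ring, Real.Gamma_add_one (by positivity)]
    have hf : (0:ℝ) < (Nat.factorial n : ℝ) := by positivity
    have hf1 : 0 < Real.Gamma (a + ((n:ℕ)+1 : ℕ)) / (Nat.factorial (n+1) : ℝ) * t ^ (n+1) := by
      have := Real.Gamma_pos_of_pos (show (0:ℝ) < a + ((n:ℕ)+1 : ℕ) by positivity)
      positivity
    rw [norm_of_nonneg hf1.le, norm_of_nonneg (by positivity)]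
    have hn1 : ((n:ℝ) + 1) ≠ 0 := by positivity
    rw [hGn]
    push_cast [Nat.factorial_succ, pow_succ]
    field_simp

private lemma tsum_gammaSeries {a t : ℝ} (ha : 0 < a) (ht0 : 0 < t) (ht1 : t < 1) :
    ∑' j : ℕ, Real.Gamma (a + j) / (Nat.factorial j : ℝ) * t ^ j
      = Real.Gamma a * (1 - t) ^ (-a) := by
  have hr : 0 < 1 - t := by linarith
  set f : ℕ → ℝ → ℝ := fun j s => t ^ j / (Nat.factorial j : ℝ) * (Real.exp (-s) * s ^ (a + j - 1))
  have hfi : ∀ j : ℕ, IntegrableOn (f j) (Ioi 0) := fun j =>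
    (Real.GammaIntegral_convergent (by positivity : (0:ℝ) < a + j)).const_mul _
  have hval : ∀ j : ℕ, ∫ s in Ioi 0, f j s = Real.Gamma (a + j) / (Nat.factorial j : ℝ) * t ^ j := by
    intro j
    have h1 : ∫ s in Ioi 0, f j s
        = t ^ j / (Nat.factorial j : ℝ) * ∫ s in Ioi 0, Real.exp (-s) * s ^ (a + j - 1) :=
      MeasureTheory.integral_const_mul _ _
    have h2 : ∫ s in Ioi 0, Real.exp (-s) * s ^ (a + (j:ℝ) - 1) = Real.Gamma (a + j) :=
      (Real.Gamma_eq_integral (by positivity)).symm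
    rw [h1, h2]; ring
  set g : ℝ → ℝ := fun s => s ^ (a - 1) * Real.exp (-((1 - t) * s))
  have hgi : IntegrableOn g (Ioi 0) := by
    have h0 : IntegrableOn (fun u => Real.exp (-u) * u ^ (a - 1)) (Ioi 0) :=
      Real.GammaIntegral_convergent ha
    have h1 : IntegrableOn (fun s => Real.exp (-((1-t)*s)) * ((1-t)*s) ^ (a - 1)) (Ioi 0) := by
      have := (integrableOn_Ioi_comp_mul_left_iff
        (fun u => Real.exp (-u) * u ^ (a - 1)) 0 hr).mpr
      simpa [mul_zero] using this (by simpa using h0)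
    have h2 : IntegrableOn
        (fun s : ℝ => ((1-t) ^ (a-1))⁻¹ * (Real.exp (-((1-t)*s)) * ((1-t)*s) ^ (a - 1)))
        (Ioi 0) := h1.const_mul _
    refine IntegrableOn.congr_fun h2 (fun s hs => ?_) measurableSet_Ioi
    have hs0 : (0:ℝ) < s := hs
    rw [Real.mul_rpow hr.le hs0.le]
    have : ((1-t) ^ (a-1)) ≠ 0 := (Real.rpow_pos_of_pos hr _).ne'
    field_simp
    ring
  have hgval : ∫ s in Ioi 0, g s = Real.Gamma a * (1 - t) ^ (-a) := by
    have := Real.integral_rpow_mul_exp_neg_mul_Ioi ha hr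
    rw [show (fun s : ℝ => g s) = fun s : ℝ => s ^ (a-1) * Real.exp (-((1-t)*s)) from rfl, this]
    rw [Real.rpow_neg hr.le, one_div, Real.inv_rpow hr.le]
    ring
  have hsum := summable_gammaSeries ha ht0 ht1
  have key : ENNReal.ofReal (∑' j : ℕ, Real.Gamma (a + j) / (Nat.factorial j : ℝ) * t ^ j)
      = ENNReal.ofReal (Real.Gamma a * (1 - t) ^ (-a)) := by
    have hnn : ∀ j : ℕ, 0 ≤ Real.Gamma (a + j) / (Nat.factorial j : ℝ) * t ^ j := by
      intro j
      have := Real.Gamma_pos_of_pos (show (0:ℝ) < a + j by positivity)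
      positivity
    rw [ENNReal.ofReal_tsum_of_nonneg hnn hsum]
    have step1 : ∀ j : ℕ, ENNReal.ofReal (Real.Gamma (a + j) / (Nat.factorial j : ℝ) * t ^ j)
        = ∫⁻ s in Ioi 0, ENNReal.ofReal (f j s) := by
      intro j
      rw [← hval j]
      refine ofReal_integral_eq_lintegral_ofReal (hfi j) ?_
      refine (ae_restrict_iff' measurableSet_Ioi).mpr (ae_of_all _ fun s hs => ?_)
      have hs0 : (0:ℝ) < s := hs
      positivity
    simp_rw [step1]
    have hmeas : ∀ j : ℕ, AEMeasurable (fun s => ENNReal.ofReal (f j s))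
        (volume.restrict (Ioi (0:ℝ))) := by
      intro j
      apply Measurable.aemeasurable
      apply ENNReal.measurable_ofReal.comp
      fun_prop
    rw [← lintegral_tsum hmeas]
    have ptwise : ∀ s ∈ Ioi (0:ℝ),
        ∑' j : ℕ, ENNReal.ofReal (f j s) = ENNReal.ofReal (g s) := by
      intro s hs
      have hs0 : (0:ℝ) < s := hs
      have hrw : ∀ j : ℕ, f j s
          = (Real.exp (-s) * s ^ (a - 1)) * ((t*s) ^ j / (Nat.factorial j : ℝ)) := by
        intro j
        simp only [f]
        rw [show a + (j:ℝ) - 1 = (a - 1) + (j:ℝ) by ring, Real.rpow_add hs0,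
          Real.rpow_natCast, mul_pow]
        ring
      have hsum2 : Summable (fun j : ℕ => (t*s) ^ j / (Nat.factorial j : ℝ)) :=
        Real.summable_pow_div_factorial (t*s)
      have hsum3 : Summable (fun j : ℕ =>
          (Real.exp (-s) * s ^ (a - 1)) * ((t*s) ^ j / (Nat.factorial j : ℝ))) :=
        hsum2.mul_left _
      calc ∑' j : ℕ, ENNReal.ofReal (f j s)
          = ∑' j : ℕ, ENNReal.ofReal
            ((Real.exp (-s) * s ^ (a - 1)) * ((t*s) ^ j / (Nat.factorial j : ℝ))) := by
            congr 1; ext j; rw [hrw j]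
        _ = ENNReal.ofReal (∑' j : ℕ,
            (Real.exp (-s) * s ^ (a - 1)) * ((t*s) ^ j / (Nat.factorial j : ℝ))) := by
            refine (ENNReal.ofReal_tsum_of_nonneg (fun j => by positivity) hsum3).symm
        _ = ENNReal.ofReal (g s) := by
            congr 1
            rw [tsum_mul_left]
            have hexp : ∑' j : ℕ, (t*s) ^ j / (Nat.factorial j : ℝ) = Real.exp (t*s) := by
              rw [Real.exp_eq_exp_ℝ]
              exact (NormedSpace.expSeries_div_hasSum_exp (t*s)).tsum_eq
            rw [hexp]
            simp only [g]
            rw [mul_right_comm, ← Real.exp_add,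
              show -s + t*s = -((1-t)*s) by ring]
            ring
    rw [setLIntegral_congr_fun measurableSet_Ioi ptwise, ← hgval]
    refine (ofReal_integral_eq_lintegral_ofReal hgi ?_).symm
    refine (ae_restrict_iff' measurableSet_Ioi).mpr (ae_of_all _ fun s hs => ?_)
    have hs0 : (0:ℝ) < s := hs
    positivity
  have h1 : 0 ≤ ∑' j : ℕ, Real.Gamma (a + j) / (Nat.factorial j : ℝ) * t ^ j :=
    tsum_nonneg (fun j => by
      have := Real.Gamma_pos_of_pos (show (0:ℝ) < a + j by positivity)
      positivity)
  have h2 : 0 ≤ Real.Gamma a * (1 - t) ^ (-a) := by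
    have := Real.Gamma_pos_of_pos ha
    positivity
  exact (ENNReal.ofReal_eq_ofReal_iff h1 h2).mp key

private def natShiftEquiv (x : ℕ) : ℕ ≃ {n : ℕ // x ≤ n} where
  toFun := fun j => ⟨x + j, Nat.le_add_right x j⟩
  invFun := fun n => (n : ℕ) - x
  left_inv := fun j => by simp
  right_inv := fun n => Subtype.ext (Nat.add_sub_cancel' n.2)

/-- Binomial thinning of a negative binomial distribution is negative binomial:
for `p = m₁/m₂`, `∑_{y=x}^∞ f(y;k,m₂) C(y,x) p^x (1-p)^{y-x} = f(x;k,m₁)`. -/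
theorem nb_binomial_thinning (k m₁ m₂ : ℝ) (hk : 0 < k)
    (hm₁ : 0 < m₁) (hm : m₁ < m₂) (x : ℕ) :
    ∑' y : {n : ℕ // x ≤ n},
      nbPmf k m₂ (y : ℕ) * ((y : ℕ).choose x : ℝ) * (m₁ / m₂) ^ x *
        (1 - m₁ / m₂) ^ ((y : ℕ) - x) = nbPmf k m₁ x := by
  have hm₂ : 0 < m₂ := hm₁.trans hm
  have hk2 : 0 < k + m₂ := by linarith
  have hk1 : 0 < k + m₁ := by linarith
  have hΓk : 0 < Real.Gamma k := Real.Gamma_pos_of_pos hk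
  set w : ℝ := (m₂ - m₁) / (k + m₂) with hw
  have hw0 : 0 < w := by apply div_pos <;> linarith
  have hw1 : w < 1 := by rw [hw, div_lt_one hk2]; linarith
  set C : ℝ := (k / (k + m₂)) ^ (k : ℝ) / (Real.Gamma k * (Nat.factorial x : ℝ)) *
      (m₁ / (k + m₂)) ^ x with hC
  rw [← (natShiftEquiv x).tsum_eq]
  have hterm : ∀ j : ℕ,
      nbPmf k m₂ ((natShiftEquiv x j : ℕ)) * (((natShiftEquiv x j : ℕ)).choose x : ℝ) *
        (m₁ / m₂) ^ x * (1 - m₁ / m₂) ^ (((natShiftEquiv x j : ℕ)) - x)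
      = C * (Real.Gamma ((k + x) + j) / (Nat.factorial j : ℝ) * w ^ j) := by
    intro j
    show nbPmf k m₂ (x + j) * (((x + j).choose x : ℕ) : ℝ) * (m₁ / m₂) ^ x *
        (1 - m₁ / m₂) ^ ((x + j) - x)
      = C * (Real.Gamma ((k + x) + j) / (Nat.factorial j : ℝ) * w ^ j)
    rw [Nat.add_sub_cancel_left]
    have hch : (((x + j).choose x : ℕ) : ℝ)
        = ((x + j).factorial : ℝ) / ((Nat.factorial x : ℝ) * (Nat.factorial j : ℝ)) := by
      rw [Nat.cast_choose ℝ (Nat.le_add_right x j), Nat.add_sub_cancel_left]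
    have hcast : (k + (((x + j : ℕ)) : ℝ)) = (k + x) + j := by push_cast; ring
    have hp1 : (1 - m₁ / m₂ : ℝ) = (m₂ - m₁) / m₂ := by field_simp
    have e1 : (m₂ / (k + m₂)) ^ (x + j) * ((m₁ / m₂) ^ x * ((m₂ - m₁) / m₂) ^ j)
        = (m₁ / (k + m₂)) ^ x * w ^ j := by
      rw [pow_add, mul_mul_mul_comm, ← mul_pow, ← mul_pow,
        show m₂ / (k + m₂) * (m₁ / m₂) = m₁ / (k + m₂) by field_simp,
        show m₂ / (k + m₂) * ((m₂ - m₁) / m₂) = w by rw [hw]; field_simp]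
    have hfx : ((Nat.factorial x : ℕ) : ℝ) ≠ 0 := by positivity
    have hfj : ((Nat.factorial j : ℕ) : ℝ) ≠ 0 := by positivity
    have hfxj : ((Nat.factorial (x + j) : ℕ) : ℝ) ≠ 0 := by positivity
    calc nbPmf k m₂ (x + j) * (((x + j).choose x : ℕ) : ℝ) * (m₁ / m₂) ^ x *
          (1 - m₁ / m₂) ^ j
        = Real.Gamma ((k + x) + j) / (Real.Gamma k * (Nat.factorial x : ℝ) *
            (Nat.factorial j : ℝ)) * (k / (k + m₂)) ^ (k : ℝ) *
            ((m₂ / (k + m₂)) ^ (x + j) * ((m₁ / m₂) ^ x * ((m₂ - m₁) / m₂) ^ j)) := by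
          rw [nbPmf, hcast, hch, hp1]
          field_simp
      _ = Real.Gamma ((k + x) + j) / (Real.Gamma k * (Nat.factorial x : ℝ) *
            (Nat.factorial j : ℝ)) * (k / (k + m₂)) ^ (k : ℝ) *
            ((m₁ / (k + m₂)) ^ x * w ^ j) := by rw [e1]
      _ = C * (Real.Gamma ((k + x) + j) / (Nat.factorial j : ℝ) * w ^ j) := by
          rw [hC]
          field_simp
  rw [tsum_congr hterm, tsum_mul_left,
    tsum_gammaSeries (by positivity) hw0 hw1,
    show (1 - w : ℝ) = (k + m₁) / (k + m₂) by rw [hw]; field_simp; ring]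
  set B : ℝ := (k + m₁) / (k + m₂) with hB
  have hB0 : 0 < B := div_pos hk1 hk2
  rw [show -(k + (x:ℝ)) = -k + -(x:ℝ) by ring, Real.rpow_add hB0,
    Real.rpow_neg hB0.le k, Real.rpow_neg hB0.le ((x:ℕ):ℝ), Real.rpow_natCast]
  have key1 : (k / (k + m₂)) ^ (k : ℝ) * (B ^ (k:ℝ))⁻¹ = (k / (k + m₁)) ^ (k : ℝ) := by
    rw [← div_eq_mul_inv, ← Real.div_rpow (by positivity) hB0.le,
      show (k / (k + m₂)) / B = k / (k + m₁) by rw [hB]; field_simp]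
  have key2 : (m₁ / (k + m₂)) ^ x * (B ^ x)⁻¹ = (m₁ / (k + m₁)) ^ x := by
    rw [← inv_pow, ← mul_pow,
      show m₁ / (k + m₂) * B⁻¹ = m₁ / (k + m₁) by
        rw [hB, inv_div]; field_simp]
  rw [hC, nbPmf, ← key1, ← key2]
  ring
end

section
/- Gamma distributions with a common mean decrease in the convex order as the shape parameter increases: let m > 0 and 0 < k₁ < k₂, and let g_i(x) = ((k_i/m)^{k_i}/Γ(k_i)) · x^{k_i−1} · e^{−(k_i/m)x} for x > 0 be the density of the Gamma(k_i, k_i/m) distribution (shape k_i, rate k_i/m, mean m). Then for every convex function φ : ℝ → ℝ such that both integrals ∫₀^∞ φ(x)·g₁(x) dx and ∫₀^∞ φ(x)·g₂(x) dx exist, one has ∫₀^∞ φ(x)·g₂(x) dx ≤ ∫₀^∞ φ(x)·g₁(x) dx. -/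
open MeasureTheory Real Set

noncomputable def gammaPdf (a b x : ℝ) : ℝ :=
  b ^ (a : ℝ) / Real.Gamma a * x ^ (a - 1 : ℝ) * Real.exp (-b * x)

lemma gammaPdf_pos {a b x : ℝ} (ha : 0 < a) (hb : 0 < b) (hx : 0 < x) :
    0 < gammaPdf a b x := by
  unfold gammaPdf; positivity

lemma gammaPdf_integrableOn {a b : ℝ} (ha : 0 < a) (hb : 0 < b) :
    IntegrableOn (gammaPdf a b) (Ioi 0) := by
  have h := integrableOn_rpow_mul_exp_neg_mul_rpow (p := 1) (s := a - 1) (b := b)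
    (by linarith) one_pos hb
  have h2 : IntegrableOn (fun x : ℝ => x ^ (a - 1 : ℝ) * Real.exp (-b * x)) (Ioi 0) := by
    refine h.congr_fun (fun x _ => ?_) measurableSet_Ioi
    beta_reduce; rw [Real.rpow_one]
  have h3 : IntegrableOn (fun x => b ^ (a:ℝ) / Real.Gamma a * (x ^ (a - 1 : ℝ) * Real.exp (-b * x))) (Ioi 0) :=
    h2.const_mul (b ^ (a : ℝ) / Real.Gamma a)
  refine h3.congr_fun (fun x _ => ?_) measurableSet_Ioi
  unfold gammaPdf; ring

lemma integral_gammaPdf {a b : ℝ} (ha : 0 < a) (hb : 0 < b) :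
    ∫ x in Ioi (0:ℝ), gammaPdf a b x = 1 := by
  unfold gammaPdf
  simp_rw [mul_assoc, integral_const_mul, neg_mul]
  rw [integral_rpow_mul_exp_neg_mul_Ioi ha hb]
  rw [div_rpow zero_le_one hb.le, one_rpow]
  have h1 : Real.Gamma a ≠ 0 := (Real.Gamma_pos_of_pos ha).ne'
  have h2 : (b : ℝ) ^ (a : ℝ) ≠ 0 := (Real.rpow_pos_of_pos hb a).ne'
  field_simp

lemma mul_gammaPdf {a b x : ℝ} (ha : 0 < a) (hb : 0 < b) (hx : 0 < x) :
    x * gammaPdf a b x = (a / b) * gammaPdf (a + 1) b x := by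
  unfold gammaPdf
  rw [Real.Gamma_add_one ha.ne', Real.rpow_add_one hb.ne',
    show a + 1 - 1 = (a - 1) + 1 by ring, Real.rpow_add_one hx.ne']
  have h1 : Real.Gamma a ≠ 0 := (Real.Gamma_pos_of_pos ha).ne'
  field_simp

lemma mul_gammaPdf_integrableOn {a b : ℝ} (ha : 0 < a) (hb : 0 < b) :
    IntegrableOn (fun x => x * gammaPdf a b x) (Ioi 0) := by
  have h3 : IntegrableOn (fun x => (a / b) * gammaPdf (a+1) b x) (Ioi 0) :=
    (gammaPdf_integrableOn (a := a + 1) (b := b) (by linarith) hb).const_mul (a / b)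
  refine h3.congr_fun (fun x hx => ?_) measurableSet_Ioi
  rw [mul_gammaPdf ha hb hx]

lemma integral_mul_gammaPdf {a b : ℝ} (ha : 0 < a) (hb : 0 < b) :
    ∫ x in Ioi (0:ℝ), x * gammaPdf a b x = a / b := by
  rw [setIntegral_congr_fun measurableSet_Ioi
    (fun x hx => mul_gammaPdf ha hb hx : EqOn _ (fun x => (a / b) * gammaPdf (a+1) b x) _)]
  rw [integral_const_mul, integral_gammaPdf (by linarith) hb, mul_one]

lemma log_gammaPdf {a b x : ℝ} (ha : 0 < a) (hb : 0 < b) (hx : 0 < x) :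
    Real.log (gammaPdf a b x) =
      Real.log (b ^ (a:ℝ) / Real.Gamma a) + (a - 1) * Real.log x + (-b * x) := by
  unfold gammaPdf
  have h1 : b ^ (a:ℝ) / Real.Gamma a ≠ 0 := by positivity
  have h2 : x ^ (a - 1 : ℝ) ≠ 0 := (Real.rpow_pos_of_pos hx _).ne'
  rw [Real.log_mul (mul_ne_zero h1 h2) (Real.exp_ne_zero _), Real.log_mul h1 h2,
    Real.log_rpow hx, Real.log_exp]

/-- Gamma distributions with a common mean decrease in the convex order as the
shape parameter increases. -/
theorem gamma_convex_order_decreasing_in_shape (m k₁ k₂ : ℝ) (hm : 0 < m)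
    (hk₁ : 0 < k₁) (hk : k₁ < k₂) (φ : ℝ → ℝ) (hφ : ConvexOn ℝ Set.univ φ)
    (h₁ : MeasureTheory.IntegrableOn (fun x => φ x * gammaPdf k₁ (k₁ / m) x)
      (Set.Ioi 0))
    (h₂ : MeasureTheory.IntegrableOn (fun x => φ x * gammaPdf k₂ (k₂ / m) x)
      (Set.Ioi 0)) :
    ∫ x in Set.Ioi (0 : ℝ), φ x * gammaPdf k₂ (k₂ / m) x ≤
      ∫ x in Set.Ioi (0 : ℝ), φ x * gammaPdf k₁ (k₁ / m) x := by
  have hk₂ : 0 < k₂ := hk₁.trans hk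
  have hb₁ : 0 < k₁ / m := div_pos hk₁ hm
  have hb₂ : 0 < k₂ / m := div_pos hk₂ hm
  have hα : (0:ℝ) < k₂ - k₁ := by linarith
  set g₁ : ℝ → ℝ := gammaPdf k₁ (k₁/m) with hg₁
  set g₂ : ℝ → ℝ := gammaPdf k₂ (k₂/m) with hg₂
  -- integrability and moments
  have Ig₁ : IntegrableOn g₁ (Ioi 0) := gammaPdf_integrableOn hk₁ hb₁
  have Ig₂ : IntegrableOn g₂ (Ioi 0) := gammaPdf_integrableOn hk₂ hb₂
  have Ix₁ : IntegrableOn (fun x => x * g₁ x) (Ioi 0) := mul_gammaPdf_integrableOn hk₁ hb₁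
  have Ix₂ : IntegrableOn (fun x => x * g₂ x) (Ioi 0) := mul_gammaPdf_integrableOn hk₂ hb₂
  have int_g₁ : ∫ x in Ioi (0:ℝ), g₁ x = 1 := integral_gammaPdf hk₁ hb₁
  have int_g₂ : ∫ x in Ioi (0:ℝ), g₂ x = 1 := integral_gammaPdf hk₂ hb₂
  have mean₁ : ∫ x in Ioi (0:ℝ), x * g₁ x = m := by
    rw [hg₁, integral_mul_gammaPdf hk₁ hb₁]; field_simp
  have mean₂ : ∫ x in Ioi (0:ℝ), x * g₂ x = m := by
    rw [hg₂, integral_mul_gammaPdf hk₂ hb₂]; field_simp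
  -- log-ratio function
  set C0 : ℝ := Real.log ((k₂/m) ^ (k₂:ℝ) / Real.Gamma k₂)
      - Real.log ((k₁/m) ^ (k₁:ℝ) / Real.Gamma k₁) with hC0
  set F : ℝ → ℝ := fun x => C0 + (k₂ - k₁) * Real.log x - (k₂/m - k₁/m) * x with hF
  have hiff : ∀ x : ℝ, 0 < x → (g₁ x < g₂ x ↔ 0 < F x) := by
    intro x hx
    have e : F x = Real.log (g₂ x) - Real.log (g₁ x) := by
      rw [hg₁, hg₂, log_gammaPdf hk₁ hb₁ hx, log_gammaPdf hk₂ hb₂ hx]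
      simp only [hF, hC0]; ring
    rw [← Real.log_lt_log_iff (gammaPdf_pos hk₁ hb₁ hx) (gammaPdf_pos hk₂ hb₂ hx), e]
    constructor <;> intro <;> linarith
  -- order convexity of {F > 0}
  have hconv : ∀ u z v : ℝ, 0 < u → u < z → z < v → 0 < F u → 0 < F v → 0 < F z := by
    intro u z v hu huz hzv hFu hFv
    have hv : 0 < v := by linarith
    have hz : 0 < z := by linarith
    have hvu : 0 < v - u := by linarith
    set lam : ℝ := (v - z) / (v - u) with hlam
    set mu : ℝ := (z - u) / (v - u) with hmu
    have hlam0 : 0 < lam := div_pos (by linarith) hvu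
    have hmu0 : 0 < mu := div_pos (by linarith) hvu
    have hsum : lam + mu = 1 := by rw [hlam, hmu]; field_simp; ring
    have hcomb : lam * u + mu * v = z := by rw [hlam, hmu]; field_simp; ring
    have hlog : lam * Real.log u + mu * Real.log v ≤ Real.log z := by
      have := strictConcaveOn_log_Ioi.concaveOn.2 (mem_Ioi.mpr hu) (mem_Ioi.mpr hv)
        hlam0.le hmu0.le hsum
      simpa [smul_eq_mul, hcomb] using this
    have expand : lam * F u + mu * F v = C0 * (lam + mu)
        + (k₂ - k₁) * (lam * Real.log u + mu * Real.log v)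
        - (k₂/m - k₁/m) * (lam * u + mu * v) := by
      simp only [hF]; ring
    rw [hsum, hcomb, mul_one] at expand
    have key : lam * F u + mu * F v ≤ F z := by
      rw [expand]
      simp only [hF]
      have h' := mul_le_mul_of_nonneg_left hlog hα.le
      linarith
    exact lt_of_lt_of_le (add_pos (mul_pos hlam0 hFu) (mul_pos hmu0 hFv)) key
  -- boundedness of {F > 0}
  have hbdd : ∀ x : ℝ, 0 < x → 0 < F x →
      x ≤ (2*m/(k₂ - k₁)) * C0 + 2*m*(Real.log (2*m) - 1) := by
    intro x hx hFx
    have h2m : (0:ℝ) < 2*m := by linarith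
    have hlogle : Real.log x ≤ x/(2*m) - 1 + Real.log (2*m) := by
      have h := Real.log_le_sub_one_of_pos (show 0 < x/(2*m) by positivity)
      rw [Real.log_div hx.ne' h2m.ne'] at h
      linarith
    simp only [hF] at hFx
    have key : (k₂ - k₁) * Real.log x ≤ (k₂ - k₁) * (x/(2*m) - 1 + Real.log (2*m)) :=
      mul_le_mul_of_nonneg_left hlogle hα.le
    have hxm : (k₂/m - k₁/m) * x * (2*m) = 2 * ((k₂ - k₁) * x) := by field_simp
    have hhalf : (k₂ - k₁) * (2*m) * (x/(2*m)) = (k₂ - k₁) * x := by field_simp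
    have hM : (k₂ - k₁) * (2*m/(k₂ - k₁) * C0) = 2*m*C0 := by field_simp
    have hFx2 : (k₂/m - k₁/m) * x < C0 + (k₂ - k₁) * (x/(2*m) - 1 + Real.log (2*m)) := by
      linarith
    have hmul := mul_lt_mul_of_pos_right hFx2 h2m
    rw [hxm] at hmul
    have goal2 : (k₂ - k₁) * x ≤ (k₂ - k₁) * (2*m/(k₂ - k₁) * C0 + 2*m*(Real.log (2*m) - 1)) := by
      nlinarith
    exact le_of_mul_le_mul_left goal2 hα
  -- case split on whether g₂ ever exceeds g₁
  by_cases hS : ∀ x ∈ Ioi (0:ℝ), g₂ x ≤ g₁ x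
  · -- then g₁ = g₂ a.e. on Ioi 0
    have hsub : IntegrableOn (fun x => g₁ x - g₂ x) (Ioi 0) := Ig₁.sub Ig₂
    have hzero : ∫ x in Ioi (0:ℝ), (g₁ x - g₂ x) = 0 := by
      rw [integral_sub Ig₁ Ig₂, int_g₁, int_g₂, sub_self]
    have hnonneg : 0 ≤ᵐ[volume.restrict (Ioi 0)] (fun x => g₁ x - g₂ x) :=
      (ae_restrict_iff' measurableSet_Ioi).mpr
        (ae_of_all _ fun x hx => sub_nonneg.mpr (hS x hx))
    have hae : (fun x => g₁ x - g₂ x) =ᵐ[volume.restrict (Ioi 0)] 0 :=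
      (integral_eq_zero_iff_of_nonneg_ae hnonneg hsub).mp hzero
    have : ∫ x in Ioi (0:ℝ), φ x * g₂ x = ∫ x in Ioi (0:ℝ), φ x * g₁ x := by
      refine integral_congr_ae ?_
      filter_upwards [hae] with x hx
      have : g₁ x = g₂ x := by simpa [sub_eq_zero] using hx
      rw [this]
    exact le_of_eq this
  · push_neg at hS
    obtain ⟨x₀, hx₀pos, hx₀⟩ := hS
    set S : Set ℝ := {x : ℝ | 0 < x ∧ 0 < F x} with hSdef
    have hx₀S : x₀ ∈ S := ⟨hx₀pos, (hiff x₀ hx₀pos).mp hx₀⟩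
    have hSne : S.Nonempty := ⟨x₀, hx₀S⟩
    have hSbddA : BddAbove S := ⟨(2*m/(k₂ - k₁)) * C0 + 2*m*(Real.log (2*m) - 1),
      fun y hy => hbdd y hy.1 hy.2⟩
    have hSbddB : BddBelow S := ⟨0, fun y hy => hy.1.le⟩
    set a : ℝ := sInf S with ha
    set b : ℝ := sSup S with hb
    have ha0 : 0 ≤ a := le_csInf hSne (fun y hy => hy.1.le)
    -- endpoints not in S
    have hnotin : ∀ c : ℝ, (c = a ∨ c = b) → c ∉ S := by
      intro c hc hcS
      obtain ⟨hcpos, hcF⟩ := hcS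
      have hcont : ContinuousAt F c := by
        have : ContinuousAt Real.log c := Real.continuousAt_log hcpos.ne'
        simp only [hF]
        fun_prop (disch := exact hcpos.ne')
      have hev : ∀ᶠ y in nhds c, 0 < F y := hcont.eventually (eventually_gt_nhds hcF)
      have hev2 : ∀ᶠ y in nhds c, 0 < y := eventually_gt_nhds hcpos
      rcases hc with hc | hc
      · have h3 : ∀ᶠ y in nhdsWithin c (Iio c), y ∈ S :=
          eventually_nhdsWithin_of_eventually_nhds (by filter_upwards [hev, hev2] with y h1 h2; exact ⟨h2, h1⟩)
        obtain ⟨y, hyS, hy⟩ := (h3.and self_mem_nhdsWithin).exists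
        exact absurd (csInf_le hSbddB hyS) (not_le.mpr (lt_of_lt_of_eq hy hc))
      · have h3 : ∀ᶠ y in nhdsWithin c (Ioi c), y ∈ S :=
          eventually_nhdsWithin_of_eventually_nhds (by filter_upwards [hev, hev2] with y h1 h2; exact ⟨h2, h1⟩)
        obtain ⟨y, hyS, hy⟩ := (h3.and self_mem_nhdsWithin).exists
        exact absurd (le_csSup hSbddA hyS) (not_le.mpr (lt_of_eq_of_lt hc.symm hy))
    have hax₀ : a < x₀ := lt_of_le_of_ne (csInf_le hSbddB hx₀S)
      (fun h => hnotin x₀ (Or.inl h.symm) hx₀S)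
    have hx₀b : x₀ < b := lt_of_le_of_ne (le_csSup hSbddA hx₀S)
      (fun h => hnotin x₀ (Or.inr h) hx₀S)
    have hab : a < b := hax₀.trans hx₀b
    -- sign facts
    have hsign_out : ∀ x ∈ Ioi (0:ℝ), x ∉ Ioo a b → g₂ x ≤ g₁ x := by
      intro x hx hxout
      by_contra hlt
      push_neg at hlt
      have hxS : x ∈ S := ⟨hx, (hiff x hx).mp hlt⟩
      have h1 : a ≤ x := csInf_le hSbddB hxS
      have h2 : x ≤ b := le_csSup hSbddA hxS
      rcases eq_or_lt_of_le h1 with heq | h1'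
      · exact hnotin x (Or.inl heq.symm) hxS
      rcases eq_or_lt_of_le h2 with heq | h2'
      · exact hnotin x (Or.inr heq) hxS
      exact hxout ⟨h1', h2'⟩
    have hsign_in : ∀ x ∈ Ioo a b, g₁ x ≤ g₂ x := by
      intro x hx
      have hxpos : 0 < x := lt_of_le_of_lt ha0 hx.1
      obtain ⟨u, huS, hu⟩ := exists_lt_of_csInf_lt hSne hx.1
      obtain ⟨v, hvS, hv⟩ := exists_lt_of_lt_csSup hSne hx.2
      exact ((hiff x hxpos).mpr (hconv u x v huS.1 hu hv huS.2 hvS.2)).le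
    -- the chord line
    set L : ℝ → ℝ := fun x => ((b - x) * φ a + (x - a) * φ b) / (b - a) with hL
    have hba : 0 < b - a := by linarith
    have hline_in : ∀ x ∈ Icc a b, φ x ≤ L x := by
      intro x hx
      rcases eq_or_lt_of_le hx.1 with rfl | h1
      · simp only [hL]; rw [le_div_iff₀ hba]; ring_nf; rfl
      rcases eq_or_lt_of_le hx.2 with rfl | h2
      · simp only [hL]; rw [le_div_iff₀ hba]; ring_nf; rfl
      have := hφ.secant_mono_aux1 (mem_univ a) (mem_univ b) h1 h2
      simp only [hL]; rw [le_div_iff₀ hba]; linarith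
    have hline_out : ∀ x : ℝ, (x ≤ a ∨ b ≤ x) → L x ≤ φ x := by
      intro x hx
      rcases hx with hx | hx
      · rcases eq_or_lt_of_le hx with rfl | h1
        · simp only [hL]; rw [div_le_iff₀ hba]; ring_nf; rfl
        have := hφ.secant_mono_aux1 (mem_univ x) (mem_univ b) h1 (by linarith : a < b)
        simp only [hL]; rw [div_le_iff₀ hba]; linarith
      · rcases eq_or_lt_of_le hx with rfl | h1
        · simp only [hL]; rw [div_le_iff₀ hba]; ring_nf; rfl
        have := hφ.secant_mono_aux1 (mem_univ a) (mem_univ x) hab h1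
        simp only [hL]; rw [div_le_iff₀ hba]; linarith
    -- pointwise inequality
    have hpt : ∀ x ∈ Ioi (0:ℝ), 0 ≤ (φ x - L x) * (g₁ x - g₂ x) := by
      intro x hx
      by_cases hxin : x ∈ Ioo a b
      · have u1 := sub_nonpos.mpr (hline_in x (Ioo_subset_Icc_self hxin))
        have u2 := sub_nonpos.mpr (hsign_in x hxin)
        nlinarith
      · have hout : x ≤ a ∨ b ≤ x := by
          rcases le_or_gt x a with h | h
          · exact Or.inl h
          · rcases le_or_gt b x with h' | h'
            · exact Or.inr h'
            · exact absurd ⟨h, h'⟩ hxin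
        exact mul_nonneg (sub_nonneg.mpr (hline_out x hout))
          (sub_nonneg.mpr (hsign_out x hx hxin))
    -- integrability of L * (g₁ - g₂)
    have hsubg : IntegrableOn (fun x => g₁ x - g₂ x) (Ioi 0) := Ig₁.sub Ig₂
    have hsubx : IntegrableOn (fun x => x * g₁ x - x * g₂ x) (Ioi 0) := Ix₁.sub Ix₂
    have IL : IntegrableOn (fun x => L x * (g₁ x - g₂ x)) (Ioi 0) := by
      have e : ∀ x : ℝ, L x * (g₁ x - g₂ x) =
          (φ a * b - φ b * a) / (b - a) * (g₁ x - g₂ x)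
            + (φ b - φ a) / (b - a) * (x * g₁ x - x * g₂ x) := by
        intro x
        simp only [hL]
        field_simp
        ring
      have : IntegrableOn (fun x => (φ a * b - φ b * a) / (b - a) * (g₁ x - g₂ x)
            + (φ b - φ a) / (b - a) * (x * g₁ x - x * g₂ x)) (Ioi 0) :=
        (hsubg.const_mul _).add (hsubx.const_mul _)
      exact this.congr_fun (fun x _ => (e x).symm) measurableSet_Ioi
    have intL : ∫ x in Ioi (0:ℝ), L x * (g₁ x - g₂ x) = 0 := by
      have e : ∀ x : ℝ, L x * (g₁ x - g₂ x) =
          (φ a * b - φ b * a) / (b - a) * (g₁ x - g₂ x)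
            + (φ b - φ a) / (b - a) * (x * g₁ x - x * g₂ x) := by
        intro x
        simp only [hL]
        field_simp
        ring
      rw [setIntegral_congr_fun measurableSet_Ioi (fun x _ => e x)]
      rw [integral_add (hsubg.const_mul _) (hsubx.const_mul _),
        integral_const_mul, integral_const_mul, integral_sub Ig₁ Ig₂, integral_sub Ix₁ Ix₂,
        int_g₁, int_g₂, mean₁, mean₂]
      ring
    -- put everything together
    have Iφh : IntegrableOn (fun x => φ x * (g₁ x - g₂ x)) (Ioi 0) := by
      have : IntegrableOn (fun x => φ x * g₁ x - φ x * g₂ x) (Ioi 0) := h₁.sub h₂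
      exact this.congr_fun (fun x _ => by ring) measurableSet_Ioi
    have hnn : 0 ≤ ∫ x in Ioi (0:ℝ), (φ x - L x) * (g₁ x - g₂ x) :=
      setIntegral_nonneg measurableSet_Ioi hpt
    have hsplit : ∫ x in Ioi (0:ℝ), (φ x - L x) * (g₁ x - g₂ x)
        = (∫ x in Ioi (0:ℝ), φ x * (g₁ x - g₂ x)) - ∫ x in Ioi (0:ℝ), L x * (g₁ x - g₂ x) := by
      rw [← integral_sub Iφh IL]
      refine setIntegral_congr_fun measurableSet_Ioi (fun x _ => ?_)
      ring
    have hmain : 0 ≤ ∫ x in Ioi (0:ℝ), φ x * (g₁ x - g₂ x) := by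
      rw [hsplit, intL, sub_zero] at hnn
      exact hnn
    have hfinal : ∫ x in Ioi (0:ℝ), φ x * (g₁ x - g₂ x)
        = (∫ x in Ioi (0:ℝ), φ x * g₁ x) - ∫ x in Ioi (0:ℝ), φ x * g₂ x := by
      rw [← integral_sub h₁ h₂]
      refine setIntegral_congr_fun measurableSet_Ioi (fun x _ => ?_)
      ring
    linarith [hfinal ▸ hmain]
end

section
/- First moment distribution identity for the negative binomial distribution: let k > 0 and m > 0, and define the first moment distribution function F^{(1)}(x;k,m) = (1/m) · ∑_{y∈ℕ, y≤x} y · f(y;k,m). Then for every x ∈ ℕ, F^{(1)}(x;k,m) = F(x−1; k+1, m + m/k), where F(·;k,m) denotes the cumulative distribution function of NB(k,m), i.e., F(x;k,m) = ∑_{y∈ℕ, y≤x} f(y;k,m). -/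
/-- First moment distribution identity for the negative binomial distribution:
`F¹(x;k,m) = (1/m)·∑_{y≤x} y·f(y;k,m) = F(x-1; k+1, m + m/k)`. -/
theorem nb_first_moment_distribution (k m : ℝ) (hk : 0 < k) (hm : 0 < m)
    (x : ℕ) :
    (1 / m) * ∑ y ∈ Finset.range (x + 1), (y : ℝ) * nbPmf k m y =
      ∑ y ∈ Finset.range x, nbPmf (k + 1) (m + m / k) y := by
  have hkm : (0:ℝ) < k + m := by linarith
  have hb : (0:ℝ) < k / (k + m) := div_pos hk hkm
  rw [Finset.sum_range_succ']
  simp only [Nat.cast_zero, zero_mul, add_zero, Finset.mul_sum]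
  refine Finset.sum_congr rfl fun y _ => ?_
  have hGamma : Real.Gamma (k + 1) = k * Real.Gamma k := Real.Gamma_add_one hk.ne'
  have h1 : (k + 1) + (m + m / k) = (k + 1) * (k + m) / k := by field_simp
  have hbase1 : (k + 1) / ((k + 1) + (m + m / k)) = k / (k + m) := by
    rw [h1]; field_simp
  have hbase2 : (m + m / k) / ((k + 1) + (m + m / k)) = m / (k + m) := by
    rw [h1]; field_simp
  have hrpow : (k / (k + m)) ^ ((k + 1 : ℝ)) =
      (k / (k + m)) ^ (k : ℝ) * (k / (k + m)) := by
    rw [Real.rpow_add_one hb.ne']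
  have hGammaArg : (k + 1) + (y : ℝ) = k + ((y + 1 : ℕ) : ℝ) := by push_cast; ring
  simp only [nbPmf, hbase1, hbase2, hrpow, hGamma, hGammaArg, Nat.factorial_succ,
    Nat.cast_mul, pow_succ]
  push_cast
  have hfpos : (0:ℝ) < (Nat.factorial y : ℝ) := by positivity
  have hGk : Real.Gamma k ≠ 0 := (Real.Gamma_pos_of_pos hk).ne'
  field_simp
end

section
/- Solvability of the prevalence equation for the negative binomial distribution: let m > 0 and p ∈ (0,1). If m + log(1−p) > 0, then there exists a unique k > 0 such that 1 − (k/(k+m))^k = p. If m + log(1−p) < 0, then there is no k > 0 with 1 − (k/(k+m))^k = p. -/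
open Real Filter Set Topology

noncomputable def nbG (m k : ℝ) : ℝ := k * (Real.log k - Real.log (k + m))

lemma nbG_eq_iff (m p k : ℝ) (hm : 0 < m) (hk : 0 < k) (h1p : 0 < 1 - p) :
    (1 - (k / (k + m)) ^ (k : ℝ) = p) ↔ nbG m k = Real.log (1 - p) := by
  have hkm : 0 < k + m := by linarith
  have hdiv : 0 < k / (k + m) := div_pos hk hkm
  rw [Real.rpow_def_of_pos hdiv]
  have hlog : Real.log (k / (k + m)) = Real.log k - Real.log (k + m) :=
    Real.log_div hk.ne' hkm.ne'
  constructor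
  · intro h
    have : Real.exp (Real.log (k / (k + m)) * k) = 1 - p := by linarith
    have := congrArg Real.log this
    rw [Real.log_exp] at this
    rw [nbG, ← hlog, mul_comm]
    exact this
  · intro h
    have : Real.log (k / (k + m)) * k = Real.log (1 - p) := by
      rw [hlog, mul_comm]; exact h
    rw [this, Real.exp_log h1p]; ring

lemma nbG_hasDerivAt (m k : ℝ) (hm : 0 < m) (hk : 0 < k) :
    HasDerivAt (nbG m)
      ((Real.log k - Real.log (k + m)) + k * (k⁻¹ - (k + m)⁻¹)) k := by
  have hkm : 0 < k + m := by linarith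
  have h1 : HasDerivAt (fun x : ℝ => Real.log x) k⁻¹ k := Real.hasDerivAt_log hk.ne'
  have h2 : HasDerivAt (fun x : ℝ => Real.log (x + m)) (k + m)⁻¹ k := by
    have := (Real.hasDerivAt_log hkm.ne').comp k ((hasDerivAt_id k).add_const m)
    simpa [Function.comp_def] using this
  have h3 := (hasDerivAt_id k).mul (h1.sub h2)
  simp [one_mul, Pi.mul_def, Pi.sub_def] at h3; exact h3

lemma nbG_strictAntiOn (m : ℝ) (hm : 0 < m) : StrictAntiOn (nbG m) (Ioi 0) := by
  have hcont : ContinuousOn (nbG m) (Ioi 0) := by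
    intro x hx
    have hx : (0:ℝ) < x := hx
    exact ((nbG_hasDerivAt m x hm hx).differentiableAt.continuousAt).continuousWithinAt
  refine strictAntiOn_of_deriv_neg (convex_Ioi 0) hcont ?_
  intro x hx
  rw [interior_Ioi] at hx
  have hx : (0:ℝ) < x := hx
  have hkm : (0:ℝ) < x + m := by linarith
  rw [(nbG_hasDerivAt m x hm hx).deriv]
  have hdiv : 0 < x / (x + m) := div_pos hx hkm
  have hne : x / (x + m) ≠ 1 := by
    have : x < x + m := by linarith
    intro h
    rw [div_eq_one_iff_eq hkm.ne'] at h
    linarith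
  have hlt := Real.log_lt_sub_one_of_pos hdiv hne
  rw [Real.log_div hx.ne' hkm.ne'] at hlt
  have hxk : x * (x⁻¹ - (x + m)⁻¹) = 1 - x / (x + m) := by
    rw [mul_sub, mul_inv_cancel₀ hx.ne', div_eq_mul_inv]
  rw [hxk]
  linarith

lemma nbG_gt (m k : ℝ) (hm : 0 < m) (hk : 0 < k) : -m < nbG m k := by
  have hkm : 0 < k + m := by linarith
  have hdiv : 0 < (k + m) / k := div_pos hkm hk
  have hne : (k + m) / k ≠ 1 := by
    intro h; rw [div_eq_one_iff_eq hk.ne'] at h; linarith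
  have hlt := Real.log_lt_sub_one_of_pos hdiv hne
  rw [Real.log_div hkm.ne' hk.ne'] at hlt
  have : nbG m k = -(k * (Real.log (k + m) - Real.log k)) := by rw [nbG]; ring
  rw [this]
  have h2 : k * (Real.log (k + m) - Real.log k) < k * ((k + m) / k - 1) :=
    mul_lt_mul_of_pos_left hlt hk
  have h3 : k * ((k + m) / k - 1) = m := by field_simp; ring
  linarith [h2, h3.le]

lemma nbG_tendsto_atTop (m : ℝ) (hm : 0 < m) :
    Tendsto (nbG m) atTop (𝓝 (-m)) := by
  have h := (Real.tendsto_mul_log_one_add_div_atTop m).neg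
  refine h.congr' ?_
  filter_upwards [eventually_gt_atTop (0:ℝ)] with k hk
  have hkm : (0:ℝ) < k + m := by linarith
  have : 1 + m / k = (k + m) / k := by field_simp
  rw [this, Real.log_div hkm.ne' hk.ne', nbG]
  ring

lemma nbG_tendsto_zero (m : ℝ) (hm : 0 < m) :
    Tendsto (nbG m) (𝓝[>] 0) (𝓝 0) := by
  have h1 : Tendsto (fun k : ℝ => k * Real.log k) (𝓝 0) (𝓝 0) := by
    have := continuous_mul_log.tendsto 0
    simpa using this
  have h2 : Tendsto (fun k : ℝ => k * Real.log (k + m)) (𝓝 0) (𝓝 0) := by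
    have hc : ContinuousAt (fun k : ℝ => k * Real.log (k + m)) 0 := by
      apply ContinuousAt.mul continuousAt_id
      exact (Real.continuousAt_log (by linarith)).comp (by fun_prop)
    simpa using hc.tendsto
  have := (h1.sub h2)
  simp only [sub_zero] at this
  have heq : (fun k : ℝ => k * Real.log k - k * Real.log (k + m)) = nbG m := by
    funext k; rw [nbG]; ring
  rw [heq] at this
  exact this.mono_left nhdsWithin_le_nhds

/-- Solvability of the prevalence equation `1 - (k/(k+m))^k = p` for the
negative binomial distribution: there is a unique solution `k > 0` when
`m + log(1-p) > 0`, and no solution when `m + log(1-p) < 0`. -/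
theorem nb_prevalence_equation_solvability (m p : ℝ) (hm : 0 < m)
    (hp : 0 < p) (hp1 : p < 1) :
    (0 < m + Real.log (1 - p) →
      ∃! k : ℝ, 0 < k ∧ 1 - (k / (k + m)) ^ (k : ℝ) = p) ∧
    (m + Real.log (1 - p) < 0 →
      ¬∃ k : ℝ, 0 < k ∧ 1 - (k / (k + m)) ^ (k : ℝ) = p) := by
  have h1p : (0:ℝ) < 1 - p := by linarith
  set L := Real.log (1 - p) with hLdef
  have hL0 : L < 0 := Real.log_neg h1p (by linarith)
  constructor
  · intro hpos
    have hLm : -m < L := by linarith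
    -- small k₀ with nbG m k₀ > L
    have h0 : ∀ᶠ k in 𝓝[>] (0:ℝ), L < nbG m k :=
      (nbG_tendsto_zero m hm).eventually (eventually_gt_nhds hL0)
    obtain ⟨k₀, hk₀L, hk₀pos⟩ := (h0.and self_mem_nhdsWithin).exists
    have hk₀pos : (0:ℝ) < k₀ := hk₀pos
    -- large k₁ with nbG m k₁ < L
    have h1 : ∀ᶠ k in atTop, nbG m k < L :=
      (nbG_tendsto_atTop m hm).eventually (eventually_lt_nhds hLm)
    obtain ⟨k₁, hk₁L, hk₁ge⟩ := (h1.and (eventually_gt_atTop k₀)).exists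
    have hk₁pos : 0 < k₁ := lt_trans hk₀pos hk₁ge
    have hcont : ContinuousOn (nbG m) (Icc k₀ k₁) := by
      intro x hx
      have hx0 : 0 < x := lt_of_lt_of_le hk₀pos hx.1
      exact ((nbG_hasDerivAt m x hm hx0).differentiableAt.continuousAt).continuousWithinAt
    have hmem : L ∈ Icc (nbG m k₁) (nbG m k₀) := ⟨hk₁L.le, hk₀L.le⟩
    obtain ⟨c, hc, hgc⟩ := intermediate_value_Icc' hk₁ge.le hcont hmem
    have hcpos : 0 < c := lt_of_lt_of_le hk₀pos hc.1
    refine ⟨c, ⟨hcpos, (nbG_eq_iff m p c hm hcpos h1p).mpr hgc⟩, ?_⟩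
    rintro y ⟨hy, heq⟩
    exact (nbG_strictAntiOn m hm).injOn hy hcpos
      (by rw [(nbG_eq_iff m p y hm hy h1p).mp heq, hgc])
  · rintro hneg ⟨k, hk, heq⟩
    have h1 := (nbG_eq_iff m p k hm hk h1p).mp heq
    have h2 := nbG_gt m k hm hk
    rw [h1] at h2
    linarith
end

section
/- The Hoover index of the negative binomial distribution is decreasing in the mean: let k > 0 and 0 < m₁ < m₂. Then (1/(2m₂)) · ∑_{x∈ℕ} |x − m₂| · f(x;k,m₂) ≤ (1/(2m₁)) · ∑_{x∈ℕ} |x − m₁| · f(x;k,m₁). -/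
open Filter Finset Topology

lemma nbPmf_pos {k m : ℝ} (hk : 0 < k) (hm : 0 < m) (x : ℕ) : 0 < nbPmf k m x := by
  have h1 : (0:ℝ) < k + x := by positivity
  have h2 : (0:ℝ) < k + m := by positivity
  have hG : 0 < Real.Gamma (k + x) := Real.Gamma_pos_of_pos h1
  have hGk : 0 < Real.Gamma k := Real.Gamma_pos_of_pos hk
  have hfac : (0:ℝ) < (Nat.factorial x : ℝ) := by positivity
  unfold nbPmf
  have : (0:ℝ) < (k / (k + m)) ^ (k : ℝ) := Real.rpow_pos_of_pos (by positivity) _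
  positivity

lemma nbPmf_succ {k m : ℝ} (hk : 0 < k) (hm : 0 < m) (x : ℕ) :
    nbPmf k m (x + 1) = (m / (k + m)) * ((k + x) / (x + 1)) * nbPmf k m x := by
  have hkx : k + (x:ℝ) ≠ 0 := by positivity
  have hfac : ((Nat.factorial x : ℕ) : ℝ) ≠ 0 := by positivity
  have hx1 : ((x:ℝ) + 1) ≠ 0 := by positivity
  have hkm : k + m ≠ 0 := by positivity
  unfold nbPmf
  have hG : Real.Gamma (k + ((x:ℕ)+1 : ℕ)) = (k + x) * Real.Gamma (k + x) := by
    push_cast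
    rw [show k + ((x:ℝ) + 1) = (k + x) + 1 by ring, Real.Gamma_add_one hkx]
  rw [hG, Nat.factorial_succ]
  push_cast
  rw [pow_succ]
  have hGk : Real.Gamma k ≠ 0 := (Real.Gamma_pos_of_pos hk).ne'
  field_simp

/-- Telescoping identity: partial sums of `(m - x) * f x`. -/
lemma S_eq {k m : ℝ} (hk : 0 < k) (hm : 0 < m) (n : ℕ) :
    ∑ x ∈ range (n + 1), (m - x) * nbPmf k m x = (m / k) * (k + n) * nbPmf k m n := by
  induction n with
  | zero => simp; field_simp; simp
  | succ n ih =>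
    rw [Finset.sum_range_succ, ih, nbPmf_succ hk hm]
    have hkm : k + m ≠ 0 := by positivity
    have hx1 : ((n:ℝ) + 1) ≠ 0 := by positivity
    push_cast
    field_simp
    ring
lemma tail_tendsto {k m : ℝ} (hk : 0 < k) (hm : 0 < m) :
    Tendsto (fun N : ℕ => (k + N) * nbPmf k m N) atTop (𝓝 0) := by
  have hkm : (0:ℝ) < k + m := by positivity
  set p : ℝ := m / (k + m) with hp
  have hp0 : 0 < p := by positivity
  have hp1 : p < 1 := by rw [hp, div_lt_one hkm]; linarith
  set r : ℝ := (p + 1) / 2 with hr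
  have hpr : p < r := by rw [hr]; linarith
  have hr1 : r < 1 := by rw [hr]; linarith
  have hsum : Summable (fun N : ℕ => (k + N) * nbPmf k m N) := by
    apply summable_of_ratio_norm_eventually_le hr1
    have htend : Tendsto (fun N : ℕ => p * ((k + (N:ℝ) + 1) / (N + 1))) atTop (𝓝 p) := by
      have h1 : Tendsto (fun N : ℕ => (k + (N:ℝ) + 1) / (N + 1)) atTop (𝓝 1) := by
        have h2 : Tendsto (fun N : ℕ => 1 + k / ((N:ℝ) + 1)) atTop (𝓝 (1 + 0)) := by
          apply tendsto_const_nhds.add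
          have := (tendsto_const_div_atTop_nhds_zero_nat k).comp (tendsto_add_atTop_nat 1)
          apply this.congr
          intro N
          simp [Function.comp]
        rw [add_zero] at h2
        apply h2.congr
        intro N
        have : ((N:ℝ) + 1) ≠ 0 := by positivity
        field_simp
        ring
      simpa using (tendsto_const_nhds.mul h1 : Tendsto _ atTop (𝓝 (p * 1)))
    have hev : ∀ᶠ N : ℕ in atTop, p * ((k + (N:ℝ) + 1) / (N + 1)) < r :=
      htend.eventually (eventually_lt_nhds hpr)
    filter_upwards [hev] with N hN
    have hfpos : 0 < nbPmf k m N := nbPmf_pos hk hm N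
    have hterm : (k + ((N:ℕ)+1:ℕ)) * nbPmf k m (N + 1)
        = p * ((k + (N:ℝ) + 1) / (N + 1)) * ((k + N) * nbPmf k m N) := by
      rw [nbPmf_succ hk hm, hp]
      push_cast
      have : ((N:ℝ) + 1) ≠ 0 := by positivity
      field_simp
      ring
    rw [Real.norm_eq_abs, Real.norm_eq_abs, hterm]
    have hpos1 : (0:ℝ) < (k + N) * nbPmf k m N := by positivity
    have hpos2 : (0:ℝ) ≤ p * ((k + (N:ℝ) + 1) / (N + 1)) := by positivity
    rw [abs_mul, abs_of_nonneg hpos2, abs_of_pos hpos1]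
    exact mul_le_mul_of_nonneg_right hN.le hpos1.le
  exact hsum.tendsto_atTop_zero

lemma hoover_formula {k m : ℝ} (hk : 0 < k) (hm : 0 < m) :
    (1 / (2 * m)) * ∑' x : ℕ, |(x : ℝ) - m| * nbPmf k m x
      = ((k + (⌊m⌋₊ : ℝ)) / k) * nbPmf k m ⌊m⌋₊ := by
  set n : ℕ := ⌊m⌋₊ with hn
  have hnm : (n : ℝ) ≤ m := Nat.floor_le hm.le
  have hmn : m < n + 1 := Nat.lt_floor_add_one m
  set L : ℝ := 2 * ((m / k) * (k + n) * nbPmf k m n) with hL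
  have hnonneg : ∀ x : ℕ, 0 ≤ |(x : ℝ) - m| * nbPmf k m x :=
    fun x => mul_nonneg (abs_nonneg _) (nbPmf_pos hk hm x).le
  -- partial sums for N ≥ n
  have hpartial : ∀ N : ℕ, n ≤ N →
      ∑ x ∈ range (N + 1), |(x : ℝ) - m| * nbPmf k m x
        = L - (m / k) * (k + N) * nbPmf k m N := by
    intro N hN
    have hsplit : ∑ x ∈ range (N + 1), |(x : ℝ) - m| * nbPmf k m x
        = ∑ x ∈ range (n + 1), |(x : ℝ) - m| * nbPmf k m x
          + ∑ x ∈ Ico (n + 1) (N + 1), |(x : ℝ) - m| * nbPmf k m x := by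
      rw [range_eq_Ico, range_eq_Ico]
      exact (Finset.sum_Ico_consecutive (fun x : ℕ => |(x : ℝ) - m| * nbPmf k m x) (Nat.zero_le _) (Nat.succ_le_succ hN)).symm
    have h1 : ∑ x ∈ range (n + 1), |(x : ℝ) - m| * nbPmf k m x
        = ∑ x ∈ range (n + 1), (m - x) * nbPmf k m x := by
      apply Finset.sum_congr rfl
      intro x hx
      rw [Finset.mem_range] at hx
      have : (x:ℝ) ≤ m := le_trans (by exact_mod_cast Nat.lt_succ_iff.mp hx) hnm
      rw [abs_of_nonpos (by linarith), neg_sub]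
    have h2 : ∑ x ∈ Ico (n + 1) (N + 1), |(x : ℝ) - m| * nbPmf k m x
        = ∑ x ∈ Ico (n + 1) (N + 1), -((m - x) * nbPmf k m x) := by
      apply Finset.sum_congr rfl
      intro x hx
      rw [Finset.mem_Ico] at hx
      have : m < (x:ℝ) := lt_of_lt_of_le hmn (by exact_mod_cast hx.1)
      rw [abs_of_pos (by linarith)]
      ring
    have h3 : ∑ x ∈ Ico (n + 1) (N + 1), (m - (x:ℝ)) * nbPmf k m x
        = ∑ x ∈ range (N + 1), (m - x) * nbPmf k m x
          - ∑ x ∈ range (n + 1), (m - x) * nbPmf k m x := by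
      have hc := Finset.sum_Ico_consecutive (fun x : ℕ => (m - (x:ℝ)) * nbPmf k m x)
        (Nat.zero_le (n+1)) (Nat.succ_le_succ hN)
      rw [range_eq_Ico, ← hc, range_eq_Ico]
      ring
    rw [hsplit, h1, h2, Finset.sum_neg_distrib, h3, S_eq hk hm, S_eq hk hm, hL]
    ring
  have htends : Tendsto (fun N : ℕ => ∑ x ∈ range N, |(x : ℝ) - m| * nbPmf k m x)
      atTop (𝓝 L) := by
    rw [← tendsto_add_atTop_iff_nat 1]
    have : Tendsto (fun N : ℕ => L - (m / k) * ((k + N) * nbPmf k m N)) atTop (𝓝 (L - (m/k) * 0)) :=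
      tendsto_const_nhds.sub (tendsto_const_nhds.mul (tail_tendsto hk hm))
    rw [mul_zero, sub_zero] at this
    apply this.congr'
    filter_upwards [eventually_ge_atTop n] with N hN
    rw [hpartial N hN]; ring
  have hsum : HasSum (fun x : ℕ => |(x : ℝ) - m| * nbPmf k m x) L :=
    (hasSum_iff_tendsto_nat_of_nonneg hnonneg L).mpr htends
  rw [hsum.tsum_eq, hL]
  have hm' : m ≠ 0 := hm.ne'
  have hk' : k ≠ 0 := hk.ne'
  field_simp
noncomputable def psi (k : ℝ) (n : ℕ) (m : ℝ) : ℝ := ((k + n) / k) * nbPmf k m n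

lemma psi_anti {k : ℝ} (hk : 0 < k) (n : ℕ) {a b : ℝ} (ha : 0 < a)
    (hna : (n : ℝ) ≤ a) (hab : a ≤ b) : psi k n b ≤ psi k n a := by
  rcases eq_or_lt_of_le hab with rfl | hab
  · exact le_refl _
  have hb : 0 < b := lt_trans ha hab
  unfold psi nbPmf
  have hGn : 0 < Real.Gamma (k + n) := Real.Gamma_pos_of_pos (by positivity)
  have hGk : 0 < Real.Gamma k := Real.Gamma_pos_of_pos hk
  have hC : 0 ≤ (k + (n:ℝ)) / k * (Real.Gamma (k + n) / (Real.Gamma k * (Nat.factorial n : ℝ))) := by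
    positivity
  set F : ℝ → ℝ := fun x => k * (Real.log k - Real.log (k + x))
      + n * (Real.log x - Real.log (k + x)) with hF
  have hexp : ∀ x : ℝ, 0 < x →
      (k / (k + x)) ^ (k:ℝ) * (x / (k + x)) ^ n = Real.exp (F x) := by
    intro x hx
    have hkx : (0:ℝ) < k + x := by positivity
    have h1 : (k / (k + x)) ^ (k:ℝ)
        = Real.exp ((Real.log k - Real.log (k + x)) * k) := by
      rw [Real.rpow_def_of_pos (by positivity), Real.log_div hk.ne' hkx.ne']
    have h2 : (x / (k + x)) ^ n
        = Real.exp ((n:ℝ) * (Real.log x - Real.log (k + x))) := by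
      rw [← Real.log_div hx.ne' hkx.ne', Real.exp_nat_mul,
        Real.exp_log (div_pos hx hkx)]
    rw [h1, h2, ← Real.exp_add, hF]
    congr 1
    ring
  have hderiv : ∀ x : ℝ, 0 < x →
      HasDerivAt F (k * (0 - ((k + x)⁻¹ * 1)) + n * (x⁻¹ - (k + x)⁻¹ * 1)) x := by
    intro x hx
    have hkx : (0:ℝ) < k + x := by positivity
    have hlog1 : HasDerivAt (fun y : ℝ => Real.log (k + y)) ((k + x)⁻¹ * 1) x :=
      (Real.hasDerivAt_log hkx.ne').comp x ((hasDerivAt_id x).const_add k)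
    have hlog2 : HasDerivAt Real.log x⁻¹ x := Real.hasDerivAt_log hx.ne'
    exact (((hasDerivAt_const x (Real.log k)).sub hlog1).const_mul k).add
      ((hlog2.sub hlog1).const_mul (n:ℝ))
  have hanti : AntitoneOn F (Set.Icc a b) := by
    apply antitoneOn_of_deriv_nonpos (convex_Icc a b)
    · intro x hx
      exact (hderiv x (lt_of_lt_of_le ha hx.1)).differentiableAt.continuousAt.continuousWithinAt
    · intro x hx
      rw [interior_Icc] at hx
      exact (hderiv x (lt_trans ha hx.1)).differentiableAt.differentiableWithinAt
    · intro x hx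
      rw [interior_Icc] at hx
      have hx0 : 0 < x := lt_trans ha hx.1
      have hkx : (0:ℝ) < k + x := by positivity
      rw [(hderiv x hx0).deriv]
      have heq : k * (0 - ((k + x)⁻¹ * 1)) + n * (x⁻¹ - (k + x)⁻¹ * 1)
          = ((n:ℝ) * (k + x) - (k + n) * x) / (x * (k + x)) := by
        field_simp
        ring
      rw [heq]
      apply div_nonpos_of_nonpos_of_nonneg
      · have hnx : (n:ℝ) ≤ x := le_trans hna hx.1.le
        nlinarith [mul_nonneg (sub_nonneg.mpr hnx) hk.le]
      · positivity
  have hFba : F b ≤ F a :=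
    hanti (Set.left_mem_Icc.mpr hab.le) (Set.right_mem_Icc.mpr hab.le) hab.le
  calc (k + (n:ℝ)) / k * (Real.Gamma (k + n) / (Real.Gamma k * (Nat.factorial n : ℝ))
        * (k / (k + b)) ^ (k:ℝ) * (b / (k + b)) ^ n)
      = ((k + (n:ℝ)) / k * (Real.Gamma (k + n) / (Real.Gamma k * (Nat.factorial n : ℝ))))
        * Real.exp (F b) := by rw [← hexp b hb]; ring
    _ ≤ ((k + (n:ℝ)) / k * (Real.Gamma (k + n) / (Real.Gamma k * (Nat.factorial n : ℝ))))
        * Real.exp (F a) := by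
        exact mul_le_mul_of_nonneg_left (Real.exp_le_exp.mpr hFba) hC
    _ = (k + (n:ℝ)) / k * (Real.Gamma (k + n) / (Real.Gamma k * (Nat.factorial n : ℝ))
        * (k / (k + a)) ^ (k:ℝ) * (a / (k + a)) ^ n) := by rw [← hexp a ha]; ring

lemma psi_junction {k : ℝ} (hk : 0 < k) (n : ℕ) :
    psi k (n + 1) ((n : ℝ) + 1) = psi k n ((n : ℝ) + 1) := by
  have hm : (0:ℝ) < (n:ℝ) + 1 := by positivity
  unfold psi
  rw [nbPmf_succ hk hm]
  have h1 : ((n:ℝ) + 1) ≠ 0 := by positivity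
  have h2 : k + ((n:ℝ) + 1) ≠ 0 := by positivity
  have h3 : k ≠ 0 := hk.ne'
  push_cast
  field_simp

lemma psi_nat_chain {k : ℝ} (hk : 0 < k) {i j : ℕ} (hi : 1 ≤ i) (hij : i ≤ j) :
    psi k j (j : ℝ) ≤ psi k i (i : ℝ) := by
  induction j with
  | zero => omega
  | succ j ih =>
    rcases Nat.lt_or_ge i (j + 1) with hlt | hge
    · have hij' : i ≤ j := Nat.lt_succ_iff.mp hlt
      have hj1 : (1:ℕ) ≤ j := le_trans hi hij'
      calc psi k (j+1) ((j+1 : ℕ) : ℝ) = psi k j ((j:ℝ) + 1) := by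
            push_cast
            exact psi_junction hk j
        _ ≤ psi k j (j : ℝ) := by
            apply psi_anti hk j (by exact_mod_cast hj1) (le_refl _) (by linarith)
        _ ≤ psi k i (i : ℝ) := ih hij'
    · have : i = j + 1 := le_antisymm hij hge
      subst this
      exact le_refl _

lemma hoover_formula' {k m : ℝ} (hk : 0 < k) (hm : 0 < m) :
    (1 / (2 * m)) * ∑' x : ℕ, |(x : ℝ) - m| * nbPmf k m x = psi k ⌊m⌋₊ m :=
  hoover_formula hk hm

/-- The Hoover index of the negative binomial distribution is decreasing
in the mean. -/
theorem nb_hoover_decreasing_in_mean (k m₁ m₂ : ℝ) (hk : 0 < k)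
    (hm₁ : 0 < m₁) (hm : m₁ < m₂) :
    (1 / (2 * m₂)) * ∑' x : ℕ, |(x : ℝ) - m₂| * nbPmf k m₂ x ≤
      (1 / (2 * m₁)) * ∑' x : ℕ, |(x : ℝ) - m₁| * nbPmf k m₁ x := by
  have hm₂ : 0 < m₂ := lt_trans hm₁ hm
  rw [hoover_formula' hk hm₂, hoover_formula' hk hm₁]
  set n₁ := ⌊m₁⌋₊ with hn₁
  set n₂ := ⌊m₂⌋₊ with hn₂
  have hn₁m : (n₁ : ℝ) ≤ m₁ := Nat.floor_le hm₁.le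
  have hn₂m : (n₂ : ℝ) ≤ m₂ := Nat.floor_le hm₂.le
  have h12 : n₁ ≤ n₂ := Nat.floor_mono hm.le
  rcases eq_or_lt_of_le h12 with heq | hlt
  · rw [← heq]
    exact psi_anti hk n₁ hm₁ hn₁m hm.le
  · have hsucc : n₁ + 1 ≤ n₂ := hlt
    have h1 : psi k n₁ ((n₁ : ℝ) + 1) ≤ psi k n₁ m₁ :=
      psi_anti hk n₁ hm₁ hn₁m (Nat.lt_floor_add_one m₁).le
    have h2 : psi k (n₁ + 1) ((n₁ : ℝ) + 1) = psi k n₁ ((n₁ : ℝ) + 1) :=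
      psi_junction hk n₁
    have h3 : psi k n₂ (n₂ : ℝ) ≤ psi k (n₁ + 1) ((n₁ + 1 : ℕ) : ℝ) :=
      psi_nat_chain hk (Nat.succ_le_succ (Nat.zero_le _)) hsucc
    have hn₂pos : (0 : ℝ) < (n₂ : ℝ) := by
      have : 1 ≤ n₂ := le_trans (Nat.succ_le_succ (Nat.zero_le _)) hsucc
      exact_mod_cast this
    have h4 : psi k n₂ m₂ ≤ psi k n₂ (n₂ : ℝ) :=
      psi_anti hk n₂ hn₂pos (le_refl _) hn₂m
    have hcast : ((n₁ + 1 : ℕ) : ℝ) = (n₁ : ℝ) + 1 := by push_cast; ring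
    rw [hcast] at h3
    linarith
end
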